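/- arXiv:1205.0025 — 2 statements merged into one kernel-verified Lean document; each statement's English description precedes it below -/
import Mathlib

section
/- Let N ≅ ℤ^d be a lattice, 𝚺 = (Σ, {v_1,...,v_k}) a simplicial stacky fan in N, and β ∈ N ⊗ ℂ. The deformed SR-cohomology module decomposes as a direct sum of S_𝚺/Z-modules: Hℤ(𝚺;β) ≅ ⊕_{α ∈ Bx(𝚺;β)} S_𝚺/(Z + S_𝚺(α)), where S_𝚺(α) is the kernel of the S_𝚺-module map S_𝚺 → ℤ[𝚺;β], [v] ↦ [v]·[Σ_i α_i v_i, α]. -/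
namespace GKZpaper

/-- The real cone spanned by the vectors `v i`, `i ∈ I`. -/
def realCone {d k : ℕ} (v : Fin k → Fin d → ℤ) (I : Finset (Fin k)) : Set (Fin d → ℝ) :=
  {x | ∃ c : Fin k → ℝ, (∀ i, 0 ≤ c i) ∧ (∀ i, i ∉ I → c i = 0) ∧
    ∀ j, x j = ∑ i, c i * (v i j : ℝ)}

/-- A (combinatorial model of a) rational simplicial fan together with the marked
lattice vectors `v i`; cones are recorded by the index sets of their generators. -/
structure StackyFan (d k : ℕ) where
  v : Fin k → Fin d → ℤ
  cones : Finset (Finset (Fin k))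
  empty_mem : ∅ ∈ cones
  downClosed : ∀ I ∈ cones, ∀ J ⊆ I, J ∈ cones
  simplicial : ∀ I ∈ cones,
    LinearIndependent ℝ (fun i : I => (fun j => (v i j : ℝ) : Fin d → ℝ))
  inter : ∀ I ∈ cones, ∀ J ∈ cones, realCone v I ∩ realCone v J = realCone v (I ∩ J)

variable {d k : ℕ}

/-- Every `v i` generates a ray of the fan. -/
def HasAllRays (F : StackyFan d k) : Prop := ∀ i, {i} ∈ F.cones

/-- The support of the fan. -/
def support (F : StackyFan d k) : Set (Fin d → ℝ) := ⋃ I ∈ F.cones, realCone F.v I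

/-- Maximal cones. -/
def IsMaxCone (F : StackyFan d k) (I : Finset (Fin k)) : Prop :=
  I ∈ F.cones ∧ ∀ J ∈ F.cones, I ⊆ J → J = I

def intPt {d : ℕ} (n : Fin d → ℤ) : Fin d → ℝ := fun j => (n j : ℝ)

/-- `Bx(σ;β)` for a complex parameter `β`: tuples `α` with `∑ αᵢ vᵢ ∈ N + β`,
`0 ≤ Re αᵢ < 1`, supported on `I`. -/
def BxCone (F : StackyFan d k) (β : Fin d → ℂ) (I : Finset (Fin k)) : Set (Fin k → ℂ) :=
  {α | (∀ i, 0 ≤ (α i).re ∧ (α i).re < 1) ∧ (∀ i, i ∉ I → α i = 0) ∧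
    ∃ n : Fin d → ℤ, ∀ j, ∑ i, α i * (F.v i j : ℂ) = (n j : ℂ) + β j}

/-- `Bx(𝚺;β)`: the union over the maximal cones. -/
def Bx (F : StackyFan d k) (β : Fin d → ℂ) : Set (Fin k → ℂ) :=
  {α | ∃ I, IsMaxCone F I ∧ α ∈ BxCone F β I}

/-- Real version of `Bx(σ;γ)`. -/
def BxConeR (F : StackyFan d k) (γ : Fin d → ℝ) (I : Finset (Fin k)) : Set (Fin k → ℝ) :=
  {a | (∀ i, 0 ≤ a i ∧ a i < 1) ∧ (∀ i, i ∉ I → a i = 0) ∧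
    ∃ n : Fin d → ℤ, ∀ j, ∑ i, a i * (F.v i j : ℝ) = (n j : ℝ) + γ j}

def BxR (F : StackyFan d k) (γ : Fin d → ℝ) : Set (Fin k → ℝ) :=
  {a | ∃ I, IsMaxCone F I ∧ a ∈ BxConeR F γ I}

/-- `Box(σ;γ) ⊂ N ⊗ ℝ` for a real parameter `γ`. -/
def BoxCone (F : StackyFan d k) (γ : Fin d → ℝ) (I : Finset (Fin k)) : Set (Fin d → ℝ) :=
  {c | (∃ n : Fin d → ℤ, ∀ j, c j = (n j : ℝ) + γ j) ∧
    ∃ a ∈ BxConeR F γ I, ∀ j, c j = ∑ i, a i * (F.v i j : ℝ)}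

def Box (F : StackyFan d k) (γ : Fin d → ℝ) : Set (Fin d → ℝ) :=
  {c | ∃ I, IsMaxCone F I ∧ c ∈ BoxCone F γ I}

/-- `I` is the minimal cone of the fan containing the point `x`. -/
def IsMinConeAt (F : StackyFan d k) (x : Fin d → ℝ) (I : Finset (Fin k)) : Prop :=
  I ∈ F.cones ∧ x ∈ realCone F.v I ∧ ∀ J ∈ F.cones, x ∈ realCone F.v J → I ⊆ J

/-- `w ∈ ∑ αᵢ vᵢ + ∑_{i ∈ I} ℤ₊ vᵢ`. -/
def shiftMem (F : StackyFan d k) (I : Finset (Fin k)) (α : Fin k → ℂ) (w : Fin d → ℂ) : Prop :=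
  ∃ m : Fin k → ℕ, (∀ i, i ∉ I → m i = 0) ∧
    ∀ j, w j = ∑ i, (α i + (m i : ℂ)) * (F.v i j : ℂ)

/-- Indexing set for the basis `[n+β, α]` of the deformed module `ℤ[𝚺;β]` (Definition 2). -/
def DefBasis (F : StackyFan d k) (β : Fin d → ℂ) : Set ((Fin d → ℂ) × (Fin k → ℂ)) :=
  {p | (∃ n : Fin d → ℤ, ∀ j, p.1 j = (n j : ℂ) + β j) ∧
    ∃ I, IsMaxCone F I ∧ p.2 ∈ BxCone F β I ∧ shiftMem F I p.2 p.1}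

/-- The defining condition for `[n'] ⬝ [n+β,α] = [n'+n+β,α']` via the maximal cone `I`. -/
def ActRelVia (F : StackyFan d k) (β : Fin d → ℂ) (I : Finset (Fin k)) (n' : Fin d → ℤ)
    (p p' : (Fin d → ℂ) × (Fin k → ℂ)) : Prop :=
  IsMaxCone F I ∧ intPt n' ∈ realCone F.v I ∧
    p.2 ∈ BxCone F β I ∧ shiftMem F I p.2 p.1 ∧
    p'.2 ∈ BxCone F β I ∧ shiftMem F I p'.2 p'.1 ∧
    ∀ j, p'.1 j = (n' j : ℂ) + p.1 j

/-- `[n'] ⬝ [n+β,α] = [n'+n+β,α']` (the product is nonzero with value `p'`). -/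
def ActRel (F : StackyFan d k) (β : Fin d → ℂ) (n' : Fin d → ℤ)
    (p p' : (Fin d → ℂ) × (Fin k → ℂ)) : Prop :=
  ∃ I, ActRelVia F β I n' p p'

/-- `Re β + δ Im β`, as a real vector. -/
def reDeform (β : Fin d → ℂ) (δ : ℝ) : Fin d → ℝ := fun j => (β j).re + δ * (β j).im

/-- `Re β + δ Im β`, regarded inside `N ⊗ ℂ`. -/
def reDeformC (β : Fin d → ℂ) (δ : ℝ) : Fin d → ℂ := fun j => ((β j).re + δ * (β j).im : ℝ)

end GKZpaper

namespace GKZpaper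

variable {d k : ℕ}

/-- The point `∑ αᵢ vᵢ` of `N ⊗ ℂ` attached to `α ∈ Bx(𝚺;β)`. -/
noncomputable def bxPoint (F : StackyFan d k) (α : Fin k → ℂ) : Fin d → ℂ :=
  fun j => ∑ i, α i * (F.v i j : ℂ)

/-- The underlying group of the deformed module `ℂ[𝚺;β]`: the free module on the basis
symbols `[n+β,α]`. -/
abbrev Mbeta (F : StackyFan d k) (β : Fin d → ℂ) := ↥(DefBasis F β) →₀ ℂ

/-- The action of the monomial `∏ [vᵢ]^{mᵢ} ∈ S_𝚺` on a basis element of `ℂ[𝚺;β]`: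
it is the corresponding basis element `[n' + n + β, α']` (with `n' = ∑ mᵢ vᵢ`) when the
monomial is nonzero in `R` and the product is nonzero, and `0` otherwise. -/
noncomputable def monAct (F : StackyFan d k) (β : Fin d → ℂ) (m : Fin k → ℕ)
    (p : ↥(DefBasis F β)) : Mbeta F β :=
  letI := Classical.propDecidable
  if h : (∃ I ∈ F.cones, ∀ i, i ∉ I → m i = 0) ∧
      ∃ q : ↥(DefBasis F β),
        ActRel F β (fun j => ∑ i, (m i : ℤ) * F.v i j) (p : (Fin d → ℂ) × (Fin k → ℂ)) q
  then Finsupp.single h.2.choose 1 else 0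

/-- The kernel `S_𝚺(α)` of the `S_𝚺`-module map `S_𝚺 → ℂ[𝚺;β]`,
`[v] ↦ [v]⬝[∑ αᵢvᵢ, α]`, pulled back to the polynomial ring presenting `S_𝚺`. -/
noncomputable def Sker (F : StackyFan d k) (β : Fin d → ℂ) (α : Fin k → ℂ) :
    Set (MvPolynomial (Fin k) ℂ) :=
  {f | ∀ hp : (bxPoint F α, α) ∈ DefBasis F β,
    (f.support.sum fun m => MvPolynomial.coeff m f •
      monAct F β (fun i => m i) ⟨(bxPoint F α, α), hp⟩) = 0}

/-- The element `Z_g = ∑ᵢ g(vᵢ)[vᵢ]` in the polynomial ring presenting `S_𝚺`. -/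
noncomputable def Zpoly (F : StackyFan d k) (g : (Fin d → ℤ) →ₗ[ℤ] ℤ) :
    MvPolynomial (Fin k) ℂ :=
  ∑ i, MvPolynomial.C ((g (F.v i) : ℤ) : ℂ) * MvPolynomial.X i

/-- The ideal presenting `(Z + S_𝚺(α)) ⊂ S_𝚺`. -/
noncomputable def Ialpha (F : StackyFan d k) (β : Fin d → ℂ)
    (g : Fin d → ((Fin d → ℤ) →ₗ[ℤ] ℤ)) (α : Fin k → ℂ) : Ideal (MvPolynomial (Fin k) ℂ) :=
  Ideal.span (Sker F β α ∪ {p | ∃ j, p = Zpoly F (g j)})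

/-- The operator `[vᵢ] ⬝ -` on `ℂ[𝚺;β]`. -/
noncomputable def Top (F : StackyFan d k) (β : Fin d → ℂ) (i : Fin k) :
    Mbeta F β →ₗ[ℂ] Mbeta F β :=
  Finsupp.lsum ℂ fun p => LinearMap.toSpanSingleton ℂ (Mbeta F β)
    (monAct F β (fun i' => if i' = i then 1 else 0) p)

/-- The operator `Z_g = ∑ᵢ g(vᵢ)[vᵢ] ⬝ -` on `ℂ[𝚺;β]`. -/
noncomputable def Zop (F : StackyFan d k) (β : Fin d → ℂ) (g : (Fin d → ℤ) →ₗ[ℤ] ℤ) :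
    Mbeta F β →ₗ[ℂ] Mbeta F β :=
  ∑ i, (((g (F.v i) : ℤ) : ℂ) • Top F β i)

/-- The submodule `Z ⬝ ℂ[𝚺;β]`. -/
noncomputable def Zsub (F : StackyFan d k) (β : Fin d → ℂ)
    (g : Fin d → ((Fin d → ℤ) →ₗ[ℤ] ℤ)) : Submodule ℂ (Mbeta F β) :=
  ⨆ j, LinearMap.range (Zop F β (g j))

/-- The deformed SR-cohomology `Hℂ(𝚺;β) = ℂ[𝚺;β] / Z⬝ℂ[𝚺;β]` (Definition 2.8). -/
noncomputable abbrev Hmod (F : StackyFan d k) (β : Fin d → ℂ)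
    (g : Fin d → ((Fin d → ℤ) →ₗ[ℤ] ℤ)) :=
  Mbeta F β ⧸ Zsub F β g

end GKZpaper

open scoped DirectSum

namespace GKZpaper

variable {d k : ℕ}

/-- The underlying group of the deformed module `ℤ[𝚺;β]` (integral coefficients). -/
abbrev MbetaZ (F : StackyFan d k) (β : Fin d → ℂ) := ↥(DefBasis F β) →₀ ℤ

/-- Integral version of `monAct`. -/
noncomputable def monActZ (F : StackyFan d k) (β : Fin d → ℂ) (m : Fin k → ℕ)
    (p : ↥(DefBasis F β)) : MbetaZ F β :=
  letI := Classical.propDecidable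
  if h : (∃ I ∈ F.cones, ∀ i, i ∉ I → m i = 0) ∧
      ∃ q : ↥(DefBasis F β),
        ActRel F β (fun j => ∑ i, (m i : ℤ) * F.v i j) (p : (Fin d → ℂ) × (Fin k → ℂ)) q
  then Finsupp.single h.2.choose 1 else 0

/-- The operator `[vᵢ] ⬝ -` on `ℤ[𝚺;β]`. -/
noncomputable def TopZ (F : StackyFan d k) (β : Fin d → ℂ) (i : Fin k) :
    MbetaZ F β →ₗ[ℤ] MbetaZ F β :=
  Finsupp.lsum ℤ fun p => LinearMap.toSpanSingleton ℤ (MbetaZ F β)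
    (monActZ F β (fun i' => if i' = i then 1 else 0) p)

/-- The operator `Z_g = ∑ᵢ g(vᵢ)[vᵢ] ⬝ -` on `ℤ[𝚺;β]`. -/
noncomputable def ZopZ (F : StackyFan d k) (β : Fin d → ℂ) (g : (Fin d → ℤ) →ₗ[ℤ] ℤ) :
    MbetaZ F β →ₗ[ℤ] MbetaZ F β :=
  ∑ i, ((g (F.v i) : ℤ) • TopZ F β i)

/-- The submodule `Z ⬝ ℤ[𝚺;β]`. -/
noncomputable def ZsubZ (F : StackyFan d k) (β : Fin d → ℂ)
    (g : Fin d → ((Fin d → ℤ) →ₗ[ℤ] ℤ)) : Submodule ℤ (MbetaZ F β) :=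
  ⨆ j, LinearMap.range (ZopZ F β (g j))

/-- The deformed SR-cohomology module `Hℤ(𝚺;β)` (Definition 2.8). -/
noncomputable abbrev HmodZ (F : StackyFan d k) (β : Fin d → ℂ)
    (g : Fin d → ((Fin d → ℤ) →ₗ[ℤ] ℤ)) :=
  MbetaZ F β ⧸ ZsubZ F β g

/-- The kernel `S_𝚺(α)` of `S_𝚺 → ℤ[𝚺;β]`, `[v] ↦ [v]⬝[∑ αᵢvᵢ, α]`, pulled back to the
polynomial ring presenting `S_𝚺`. -/
noncomputable def SkerZ (F : StackyFan d k) (β : Fin d → ℂ) (α : Fin k → ℂ) :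
    Set (MvPolynomial (Fin k) ℤ) :=
  {f | ∀ hp : (bxPoint F α, α) ∈ DefBasis F β,
    (f.support.sum fun m => MvPolynomial.coeff m f •
      monActZ F β (fun i => m i) ⟨(bxPoint F α, α), hp⟩) = 0}

/-- The submodule presenting `(Z + S_𝚺(α)) ⊂ S_𝚺`. -/
noncomputable def NalphaZ (F : StackyFan d k) (β : Fin d → ℂ)
    (g : Fin d → ((Fin d → ℤ) →ₗ[ℤ] ℤ)) (α : Fin k → ℂ) :
    Submodule ℤ (MvPolynomial (Fin k) ℤ) :=
  (Ideal.span (SkerZ F β α ∪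
    {p | ∃ j, p = ∑ i, MvPolynomial.C (g j (F.v i)) * MvPolynomial.X i})).restrictScalars ℤ

section Auxiliary

variable {d k : ℕ} (F : StackyFan d k) (β : Fin d → ℂ)

/-! ### Linear independence transfer -/

lemma sumR_eq {I : Finset (Fin k)} (hI : I ∈ F.cones) {a b : Fin k → ℝ}
    (ha : ∀ i ∉ I, a i = 0) (hb : ∀ i ∉ I, b i = 0)
    (h : ∀ j, ∑ i, a i * (F.v i j : ℝ) = ∑ i, b i * (F.v i j : ℝ)) : a = b := by
  have hli := F.simplicial I hI
  rw [Fintype.linearIndependent_iff] at hli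
  have key := hli (fun i : I => a i - b i) ?_
  · funext i
    by_cases hi : i ∈ I
    · have h0 : a i - b i = 0 := key ⟨i, hi⟩
      linarith
    · rw [ha i hi, hb i hi]
  · funext j
    simp only [Finset.sum_apply, Pi.smul_apply, smul_eq_mul, Pi.zero_apply]
    rw [Finset.sum_coe_sort I (fun i => (a i - b i) * (F.v i j : ℝ))]
    rw [Finset.sum_subset (Finset.subset_univ I)
      (fun x _ hx => by rw [ha x hx, hb x hx]; ring)]
    simp only [sub_mul]
    rw [Finset.sum_sub_distrib, h j, sub_self]

lemma sumC_eq {I : Finset (Fin k)} (hI : I ∈ F.cones) {a b : Fin k → ℂ}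
    (ha : ∀ i ∉ I, a i = 0) (hb : ∀ i ∉ I, b i = 0)
    (h : ∀ j, ∑ i, a i * (F.v i j : ℂ) = ∑ i, b i * (F.v i j : ℂ)) : a = b := by
  have hre : (fun i => (a i).re) = (fun i => (b i).re) := by
    apply sumR_eq F hI (fun i hi => by rw [ha i hi]; rfl) (fun i hi => by rw [hb i hi]; rfl)
    intro j
    have h2 := congrArg Complex.re (h j)
    simpa [Complex.re_sum, Complex.mul_re] using h2
  have him : (fun i => (a i).im) = (fun i => (b i).im) := by
    apply sumR_eq F hI (fun i hi => by rw [ha i hi]; rfl) (fun i hi => by rw [hb i hi]; rfl)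
    intro j
    have h2 := congrArg Complex.im (h j)
    simpa [Complex.im_sum, Complex.mul_im] using h2
  funext i
  exact Complex.ext (congrFun hre i) (congrFun him i)

lemma natMem_realCone {I : Finset (Fin k)} (m : Fin k → ℕ) (hm : ∀ i ∉ I, m i = 0) :
    (fun j => ∑ i, (m i : ℝ) * (F.v i j : ℝ)) ∈ realCone F.v I :=
  ⟨fun i => (m i : ℝ), fun i => Nat.cast_nonneg _,
    fun i hi => by show ((m i:ℝ)) = 0; rw [hm i hi, Nat.cast_zero], fun _ => rfl⟩

lemma natSupp {I₁ I₂ : Finset (Fin k)} (h₁ : I₁ ∈ F.cones) (h₂ : I₂ ∈ F.cones)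
    {m : Fin k → ℕ} (hm : ∀ i ∉ I₁, m i = 0)
    (hx : (fun j => ∑ i, (m i : ℝ) * (F.v i j : ℝ)) ∈ realCone F.v I₂) :
    ∀ i ∉ I₂, m i = 0 := by
  have hmem : (fun j => ∑ i, (m i : ℝ) * (F.v i j : ℝ)) ∈ realCone F.v (I₁ ∩ I₂) := by
    rw [← F.inter I₁ h₁ I₂ h₂]; exact ⟨natMem_realCone F m hm, hx⟩
  obtain ⟨c, _, hcsupp, hcsum⟩ := hmem
  have hmc : (fun i => (m i : ℝ)) = c := by
    apply sumR_eq F h₁ (fun i hi => by show ((m i:ℝ)) = 0; rw [hm i hi, Nat.cast_zero])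
      (fun i hi => hcsupp i (fun hmem' => hi (Finset.mem_inter.mp hmem').1))
    intro j
    exact hcsum j
  intro i hi
  have h0 : (m i : ℝ) = 0 := by
    rw [congrFun hmc i]
    exact hcsupp i (fun hmem' => hi (Finset.mem_inter.mp hmem').2)
  exact_mod_cast h0

lemma natRep_eq {I₁ I₂ : Finset (Fin k)} (h₁ : I₁ ∈ F.cones) (h₂ : I₂ ∈ F.cones)
    {m₁ m₂ : Fin k → ℕ} (hm₁ : ∀ i ∉ I₁, m₁ i = 0) (hm₂ : ∀ i ∉ I₂, m₂ i = 0)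
    (h : ∀ j, ∑ i, (m₁ i : ℝ) * (F.v i j : ℝ) = ∑ i, (m₂ i : ℝ) * (F.v i j : ℝ)) :
    m₁ = m₂ := by
  have hs : ∀ i ∉ I₂, m₁ i = 0 := natSupp F h₁ h₂ hm₁
    ⟨fun i => (m₂ i : ℝ), fun i => Nat.cast_nonneg _,
      fun i hi => by show ((m₂ i:ℝ)) = 0; rw [hm₂ i hi, Nat.cast_zero], fun j => h j⟩
  have h3 := sumR_eq F h₂ (a := fun i => (m₁ i : ℝ)) (b := fun i => (m₂ i : ℝ))
    (fun i hi => by show ((m₁ i:ℝ)) = 0; rw [hs i hi, Nat.cast_zero])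
    (fun i hi => by show ((m₂ i:ℝ)) = 0; rw [hm₂ i hi, Nat.cast_zero]) h
  funext i
  exact_mod_cast congrFun h3 i

lemma natSum_real {m₁ m₂ : Fin k → ℕ}
    (h : ∀ j, ∑ i, (m₁ i : ℂ) * (F.v i j : ℂ) = ∑ i, (m₂ i : ℂ) * (F.v i j : ℂ)) :
    ∀ j, ∑ i, (m₁ i : ℝ) * (F.v i j : ℝ) = ∑ i, (m₂ i : ℝ) * (F.v i j : ℝ) := by
  intro j
  have h2 := congrArg Complex.re (h j)
  simpa [Complex.re_sum, Complex.mul_re] using h2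

end Auxiliary

section Action

variable {d k : ℕ} (F : StackyFan d k) (β : Fin d → ℂ)

/-- Indicator exponent. -/
def eE (i : Fin k) : Fin k → ℕ := fun i' => if i' = i then 1 else 0

/-- The shifted basis pair `[∑ mᵢvᵢ + n + β, α]`. -/
def Pm (m : Fin k → ℕ) (p : (Fin d → ℂ) × (Fin k → ℂ)) : (Fin d → ℂ) × (Fin k → ℂ) :=
  (fun j => ((∑ i, (m i : ℤ) * F.v i j : ℤ) : ℂ) + p.1 j, p.2)

/-- The condition for the monomial with exponents `m` to act nontrivially on `p`. -/
def Cond (m : Fin k → ℕ) (p : (Fin d → ℂ) × (Fin k → ℂ)) : Prop :=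
  ∃ I, IsMaxCone F I ∧ (∀ i ∉ I, m i = 0) ∧ p.2 ∈ BxCone F β I ∧
    shiftMem F I p.2 p.1 ∧ shiftMem F I p.2 (Pm F m p).1

/-- The `dite` condition appearing in `monActZ`. -/
abbrev Hcond (m : Fin k → ℕ) (P : ↥(DefBasis F β)) : Prop :=
  (∃ I ∈ F.cones, ∀ i, i ∉ I → m i = 0) ∧
    ∃ q : ↥(DefBasis F β),
      ActRel F β (fun j => ∑ i, (m i : ℤ) * F.v i j) (P : (Fin d → ℂ) × (Fin k → ℂ)) q

lemma sum_cast (m : Fin k → ℕ) (j : Fin d) :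
    ((∑ i, (m i : ℤ) * F.v i j : ℤ) : ℂ) = ∑ i, (m i : ℂ) * (F.v i j : ℂ) := by
  push_cast
  rfl

lemma sum_castR (m : Fin k → ℕ) (j : Fin d) :
    ((∑ i, (m i : ℤ) * F.v i j : ℤ) : ℝ) = ∑ i, (m i : ℝ) * (F.v i j : ℝ) := by
  push_cast
  rfl

lemma sum_shift (α : Fin k → ℂ) (m₀ m₁ : Fin k → ℕ) (j : Fin d) :
    ((∑ i, (m₀ i : ℤ) * F.v i j : ℤ) : ℂ) + ∑ i, (α i + (m₁ i : ℂ)) * (F.v i j : ℂ)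
      = ∑ i, (α i + ((m₁ i + m₀ i : ℕ) : ℂ)) * (F.v i j : ℂ) := by
  rw [sum_cast, ← Finset.sum_add_distrib]
  exact Finset.sum_congr rfl (fun i _ => by push_cast; ring)

lemma cancel_alpha {α : Fin k → ℂ} {a b : Fin k → ℕ} {j : Fin d}
    (h : ∑ i, (α i + (a i : ℂ)) * (F.v i j : ℂ) = ∑ i, (α i + (b i : ℂ)) * (F.v i j : ℂ)) :
    ∑ i, (a i : ℂ) * (F.v i j : ℂ) = ∑ i, (b i : ℂ) * (F.v i j : ℂ) := by
  have h2 : ∀ c : Fin k → ℕ, ∑ i, (α i + (c i : ℂ)) * (F.v i j : ℂ)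
      = (∑ i, α i * (F.v i j : ℂ)) + ∑ i, (c i : ℂ) * (F.v i j : ℂ) := fun c => by
    rw [← Finset.sum_add_distrib]
    exact Finset.sum_congr rfl fun i _ => by ring
  rw [h2 a, h2 b] at h
  exact add_left_cancel h

lemma pm_zero (p : (Fin d → ℂ) × (Fin k → ℂ)) : Pm F (fun _ => 0) p = p := by
  refine Prod.ext (funext fun j => ?_) rfl
  show ((∑ i, ((0 : ℕ) : ℤ) * F.v i j : ℤ) : ℂ) + p.1 j = p.1 j
  simp

lemma pm_comp (m m' : Fin k → ℕ) (p : (Fin d → ℂ) × (Fin k → ℂ)) :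
    Pm F m' (Pm F m p) = Pm F (fun i => m i + m' i) p := by
  refine Prod.ext (funext fun j => ?_) rfl
  show ((∑ i, (m' i : ℤ) * F.v i j : ℤ) : ℂ) + (((∑ i, (m i : ℤ) * F.v i j : ℤ) : ℂ) + p.1 j)
      = ((∑ i, ((m i + m' i : ℕ) : ℤ) * F.v i j : ℤ) : ℂ) + p.1 j
  have h3 : ((∑ i, ((m i + m' i : ℕ) : ℤ) * F.v i j : ℤ) : ℂ)
      = ((∑ i, (m i : ℤ) * F.v i j : ℤ) : ℂ) + ((∑ i, (m' i : ℤ) * F.v i j : ℤ) : ℂ) := by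
    rw [sum_cast, sum_cast, sum_cast, ← Finset.sum_add_distrib]
    exact Finset.sum_congr rfl fun i _ => by push_cast; ring
  rw [h3]
  ring

lemma pm_mem_defBasis {p : (Fin d → ℂ) × (Fin k → ℂ)} (hp : p ∈ DefBasis F β)
    {m : Fin k → ℕ} (hC : Cond F β m p) : Pm F m p ∈ DefBasis F β := by
  obtain ⟨⟨n, hn⟩, -⟩ := hp
  obtain ⟨I, hmax, hm, hbx, hs, hs'⟩ := hC
  refine ⟨⟨fun j => (∑ i, (m i : ℤ) * F.v i j) + n j, fun j => ?_⟩, I, hmax, hbx, hs'⟩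
  show ((∑ i, (m i : ℤ) * F.v i j : ℤ) : ℂ) + p.1 j = _
  rw [hn j]
  push_cast
  ring

lemma actRel_spec {m : Fin k → ℕ} {P q : ↥(DefBasis F β)}
    (hm : ∃ I ∈ F.cones, ∀ i, i ∉ I → m i = 0)
    (hA : ActRel F β (fun j => ∑ i, (m i : ℤ) * F.v i j) (P : (Fin d → ℂ) × (Fin k → ℂ)) q) :
    Cond F β m (P : (Fin d → ℂ) × (Fin k → ℂ)) ∧
      (q : (Fin d → ℂ) × (Fin k → ℂ)) = Pm F m (P : (Fin d → ℂ) × (Fin k → ℂ)) := by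
  obtain ⟨I₀, hI₀, hm0⟩ := hm
  obtain ⟨I, hmax, hn', hbxp, hsp, hbxq, hsq, hq1⟩ := hA
  have hmI : ∀ i ∉ I, m i = 0 := by
    apply natSupp F hI₀ hmax.1 hm0
    have he : (fun j => ∑ i, (m i : ℝ) * (F.v i j : ℝ))
        = intPt (fun j => ∑ i, (m i : ℤ) * F.v i j) :=
      funext fun j => (sum_castR F m j).symm
    rw [he]
    exact hn'
  obtain ⟨m', hm'0, hm's⟩ := hsp
  obtain ⟨l, hl0, hls⟩ := hsq
  have hco : (fun i => (q : (Fin d → ℂ) × (Fin k → ℂ)).2 i + (l i : ℂ))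
      = (fun i => (P : (Fin d → ℂ) × (Fin k → ℂ)).2 i + ((m' i + m i : ℕ) : ℂ)) := by
    apply sumC_eq F hmax.1
    · intro i hi
      show (q : (Fin d → ℂ) × (Fin k → ℂ)).2 i + (l i : ℂ) = 0
      rw [hbxq.2.1 i hi, hl0 i hi]
      simp
    · intro i hi
      show (P : (Fin d → ℂ) × (Fin k → ℂ)).2 i + ((m' i + m i : ℕ) : ℂ) = 0
      rw [hbxp.2.1 i hi, hm'0 i hi, hmI i hi]
      simp
    · intro j
      show ∑ i, ((q : (Fin d → ℂ) × (Fin k → ℂ)).2 i + (l i : ℂ)) * (F.v i j : ℂ) = _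
      rw [← hls j, hq1 j, hm's j]
      exact sum_shift F (P : (Fin d → ℂ) × (Fin k → ℂ)).2 m m' j
  have hl_eq : ∀ i, l i = m' i + m i := by
    intro i
    have hc := congrFun hco i
    have hre := congrArg Complex.re hc
    simp only [Complex.add_re, Complex.natCast_re] at hre
    have h1 := (hbxq.1 i).1
    have h2 := (hbxq.1 i).2
    have h3 := (hbxp.1 i).1
    have h4 := (hbxp.1 i).2
    have hb1 : ((l i : ℤ) : ℝ) - ((m' i + m i : ℕ) : ℝ)
        = ((P : (Fin d → ℂ) × (Fin k → ℂ)).2 i).re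
          - ((q : (Fin d → ℂ) × (Fin k → ℂ)).2 i).re := by
      push_cast
      push_cast at hre
      linarith
    have hlt : ((l i : ℤ) : ℝ) - (((m' i + m i : ℕ) : ℤ) : ℝ) < 1 := by
      push_cast
      push_cast at hb1
      linarith
    have hgt : (-1 : ℝ) < ((l i : ℤ) : ℝ) - (((m' i + m i : ℕ) : ℤ) : ℝ) := by
      push_cast
      push_cast at hb1
      linarith
    have hlt' : (l i : ℤ) - ((m' i + m i : ℕ) : ℤ) < 1 := by exact_mod_cast hlt
    have hgt' : (-1 : ℤ) < (l i : ℤ) - ((m' i + m i : ℕ) : ℤ) := by exact_mod_cast hgt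
    omega
  have hq2 : (q : (Fin d → ℂ) × (Fin k → ℂ)).2 = (P : (Fin d → ℂ) × (Fin k → ℂ)).2 := by
    funext i
    have hc := congrFun hco i
    rw [hl_eq i] at hc
    exact add_right_cancel hc
  have hq1' : (q : (Fin d → ℂ) × (Fin k → ℂ)).1
      = (Pm F m (P : (Fin d → ℂ) × (Fin k → ℂ))).1 := funext fun j => hq1 j
  refine ⟨⟨I, hmax, hmI, hbxp, ⟨m', hm'0, hm's⟩, ?_⟩, Prod.ext hq1' hq2⟩
  refine ⟨fun i => m' i + m i, fun i hi => by show m' i + m i = 0; rw [hm'0 i hi, hmI i hi], fun j => ?_⟩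
  show ((∑ i, (m i : ℤ) * F.v i j : ℤ) : ℂ) + (P : (Fin d → ℂ) × (Fin k → ℂ)).1 j = _
  rw [hm's j]
  exact sum_shift F (P : (Fin d → ℂ) × (Fin k → ℂ)).2 m m' j

lemma cond_hcond {m : Fin k → ℕ} {P : ↥(DefBasis F β)}
    (hC : Cond F β m (P : (Fin d → ℂ) × (Fin k → ℂ))) : Hcond F β m P := by
  obtain ⟨I, hmax, hm, hbx, hs, hs'⟩ := hC
  refine ⟨⟨I, hmax.1, hm⟩,
    ⟨⟨Pm F m (P : (Fin d → ℂ) × (Fin k → ℂ)),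
      pm_mem_defBasis F β P.2 ⟨I, hmax, hm, hbx, hs, hs'⟩⟩,
      I, hmax, ?_, hbx, hs, hbx, hs', fun j => rfl⟩⟩
  exact ⟨fun i => (m i : ℝ), fun i => Nat.cast_nonneg _,
    fun i hi => by show ((m i : ℝ)) = 0; rw [hm i hi, Nat.cast_zero],
    fun j => sum_castR F m j⟩

lemma monActZ_eq_single {m : Fin k → ℕ} {P : ↥(DefBasis F β)}
    (hC : Cond F β m (P : (Fin d → ℂ) × (Fin k → ℂ))) :
    monActZ F β m P
      = Finsupp.single ⟨Pm F m (P : (Fin d → ℂ) × (Fin k → ℂ)), pm_mem_defBasis F β P.2 hC⟩ 1 := by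
  have hH := cond_hcond F β hC
  unfold monActZ
  rw [dif_pos hH]
  congr 1
  exact Subtype.ext (actRel_spec F β hH.1 hH.2.choose_spec).2

lemma monActZ_eq_zero {m : Fin k → ℕ} {P : ↥(DefBasis F β)}
    (hC : ¬ Cond F β m (P : (Fin d → ℂ) × (Fin k → ℂ))) :
    monActZ F β m P = 0 := by
  unfold monActZ
  rw [dif_neg (fun hH => hC (actRel_spec F β hH.1 hH.2.choose_spec).1)]

lemma topZ_single (i : Fin k) (P : ↥(DefBasis F β)) (c : ℤ) :
    TopZ F β i (Finsupp.single P c) = c • monActZ F β (eE i) P := by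
  unfold TopZ
  rw [Finsupp.lsum_single, LinearMap.toSpanSingleton_apply]
  rfl

end Action

section Mult

variable {d k : ℕ} (F : StackyFan d k) (β : Fin d → ℂ)

lemma cond_add_of (i : Fin k) {m : Fin k → ℕ} {P : ↥(DefBasis F β)}
    (h1 : Cond F β m (P : (Fin d → ℂ) × (Fin k → ℂ)))
    (h2 : Cond F β (eE i) (Pm F m (P : (Fin d → ℂ) × (Fin k → ℂ)))) :
    Cond F β (fun i' => m i' + eE i i') (P : (Fin d → ℂ) × (Fin k → ℂ)) := by
  obtain ⟨I₁, hmax₁, hm₁, hbx₁, ⟨m', hm'0, hm's⟩, ⟨m'', hm''0, hm''s⟩⟩ := h1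
  obtain ⟨I₂, hmax₂, he₂, hbx₂, ⟨l, hl0, hls⟩, ⟨l', hl'0, hl's⟩⟩ := h2
  have hm''eq : m'' = fun i' => m' i' + m i' := by
    have hco := sumC_eq F hmax₁.1
      (a := fun i' => (P : (Fin d → ℂ) × (Fin k → ℂ)).2 i' + (m'' i' : ℂ))
      (b := fun i' => (P : (Fin d → ℂ) × (Fin k → ℂ)).2 i' + ((m' i' + m i' : ℕ) : ℂ))
      (fun i' hi' => by
        show (P : (Fin d → ℂ) × (Fin k → ℂ)).2 i' + (m'' i' : ℂ) = 0
        rw [hbx₁.2.1 i' hi', hm''0 i' hi']; simp)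
      (fun i' hi' => by
        show (P : (Fin d → ℂ) × (Fin k → ℂ)).2 i' + ((m' i' + m i' : ℕ) : ℂ) = 0
        rw [hbx₁.2.1 i' hi', hm'0 i' hi', hm₁ i' hi']; simp)
      (fun j => by
        show ∑ i', ((P : (Fin d → ℂ) × (Fin k → ℂ)).2 i' + (m'' i' : ℂ)) * (F.v i' j : ℂ) = _
        rw [← hm''s j]
        show ((∑ i', (m i' : ℤ) * F.v i' j : ℤ) : ℂ)
          + (P : (Fin d → ℂ) × (Fin k → ℂ)).1 j = _
        rw [hm's j]
        exact sum_shift F (P : (Fin d → ℂ) × (Fin k → ℂ)).2 m m' j)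
    funext i'
    have hc := congrFun hco i'
    have h5 : ((m'' i' : ℕ) : ℂ) = ((m' i' + m i' : ℕ) : ℂ) := add_left_cancel hc
    exact_mod_cast h5
  have hleq : (fun i' => m' i' + m i') = l := by
    apply natRep_eq F hmax₁.1 hmax₂.1
      (fun i' hi' => by show m' i' + m i' = 0; rw [hm'0 i' hi', hm₁ i' hi'])
      hl0
    apply natSum_real F
    intro j
    apply cancel_alpha F (α := (P : (Fin d → ℂ) × (Fin k → ℂ)).2)
      (a := fun i' => m' i' + m i') (b := l)
    have e1 : (Pm F m (P : (Fin d → ℂ) × (Fin k → ℂ))).1 j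
        = ∑ i', ((P : (Fin d → ℂ) × (Fin k → ℂ)).2 i' + ((m' i' + m i' : ℕ) : ℂ))
            * (F.v i' j : ℂ) := by
      have h6 := hm''s j
      rw [hm''eq] at h6
      exact h6
    have e2 : (Pm F m (P : (Fin d → ℂ) × (Fin k → ℂ))).1 j
        = ∑ i', ((P : (Fin d → ℂ) × (Fin k → ℂ)).2 i' + (l i' : ℂ)) * (F.v i' j : ℂ) := hls j
    exact e1.symm.trans e2
  have hm'I₂ : ∀ i' ∉ I₂, m' i' = 0 ∧ m i' = 0 := by
    intro i' hi'
    have hc2 : m' i' + m i' = 0 := by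
      have hc := congrFun hleq i'
      rw [hl0 i' hi'] at hc
      exact hc
    exact ⟨Nat.eq_zero_of_add_eq_zero_right hc2, Nat.eq_zero_of_add_eq_zero_left hc2⟩
  refine ⟨I₂, hmax₂, ?_, hbx₂,
    ⟨m', fun i' hi' => (hm'I₂ i' hi').1, hm's⟩, ⟨l', hl'0, fun j => ?_⟩⟩
  · intro i' hi'
    show m i' + eE i i' = 0
    rw [(hm'I₂ i' hi').2, he₂ i' hi']
  · have hpc : (Pm F (eE i) (Pm F m (P : (Fin d → ℂ) × (Fin k → ℂ)))).1 j
        = (Pm F (fun i' => m i' + eE i i') (P : (Fin d → ℂ) × (Fin k → ℂ))).1 j :=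
      congrArg (fun z : (Fin d → ℂ) × (Fin k → ℂ) => z.1 j)
        (pm_comp F m (eE i) (P : (Fin d → ℂ) × (Fin k → ℂ)))
    rw [← hpc]
    exact hl's j

lemma cond_of_add₂ (i : Fin k) {m : Fin k → ℕ} {P : ↥(DefBasis F β)}
    (h : Cond F β (fun i' => m i' + eE i i') (P : (Fin d → ℂ) × (Fin k → ℂ))) :
    Cond F β (eE i) (Pm F m (P : (Fin d → ℂ) × (Fin k → ℂ))) := by
  obtain ⟨I, hmax, hsupp, hbx, ⟨m', hm'0, hm's⟩, ⟨l', hl'0, hl's⟩⟩ := h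
  have hmi : ∀ i' ∉ I, m i' = 0 := fun i' hi' => by exact Nat.eq_zero_of_add_eq_zero_right (hsupp i' hi')
  have hei : ∀ i' ∉ I, eE i i' = 0 := fun i' hi' => by
    exact Nat.eq_zero_of_add_eq_zero_left (hsupp i' hi')
  refine ⟨I, hmax, hei, hbx,
    ⟨fun i' => m' i' + m i',
      fun i' hi' => by show m' i' + m i' = 0; rw [hm'0 i' hi', hmi i' hi'], fun j => ?_⟩,
    ⟨l', hl'0, fun j => ?_⟩⟩
  · show ((∑ i', (m i' : ℤ) * F.v i' j : ℤ) : ℂ) + (P : (Fin d → ℂ) × (Fin k → ℂ)).1 j = _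
    rw [hm's j]
    exact sum_shift F (P : (Fin d → ℂ) × (Fin k → ℂ)).2 m m' j
  · have hpc : (Pm F (eE i) (Pm F m (P : (Fin d → ℂ) × (Fin k → ℂ)))).1 j
        = (Pm F (fun i' => m i' + eE i i') (P : (Fin d → ℂ) × (Fin k → ℂ))).1 j :=
      congrArg (fun z : (Fin d → ℂ) × (Fin k → ℂ) => z.1 j)
        (pm_comp F m (eE i) (P : (Fin d → ℂ) × (Fin k → ℂ)))
    rw [hpc]
    exact hl's j

lemma cond_of_add₁ (i : Fin k) {m : Fin k → ℕ} {P : ↥(DefBasis F β)}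
    (h : Cond F β (fun i' => m i' + eE i i') (P : (Fin d → ℂ) × (Fin k → ℂ))) :
    Cond F β m (P : (Fin d → ℂ) × (Fin k → ℂ)) := by
  obtain ⟨I, hmax, hsupp, hbx, ⟨m', hm'0, hm's⟩, ⟨l', hl'0, hl's⟩⟩ := h
  have hmi : ∀ i' ∉ I, m i' = 0 := fun i' hi' => by exact Nat.eq_zero_of_add_eq_zero_right (hsupp i' hi')
  refine ⟨I, hmax, hmi, hbx, ⟨m', hm'0, hm's⟩,
    ⟨fun i' => m' i' + m i',
      fun i' hi' => by show m' i' + m i' = 0; rw [hm'0 i' hi', hmi i' hi'], fun j => ?_⟩⟩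
  show ((∑ i', (m i' : ℤ) * F.v i' j : ℤ) : ℂ) + (P : (Fin d → ℂ) × (Fin k → ℂ)).1 j = _
  rw [hm's j]
  exact sum_shift F (P : (Fin d → ℂ) × (Fin k → ℂ)).2 m m' j

lemma topZ_monActZ (i : Fin k) (m : Fin k → ℕ) (P : ↥(DefBasis F β)) :
    TopZ F β i (monActZ F β m P) = monActZ F β (fun i' => m i' + eE i i') P := by
  by_cases hC : Cond F β m (P : (Fin d → ℂ) × (Fin k → ℂ))
  · rw [monActZ_eq_single F β hC, topZ_single, one_smul]
    by_cases hC2 : Cond F β (eE i) (Pm F m (P : (Fin d → ℂ) × (Fin k → ℂ)))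
    · rw [monActZ_eq_single F β (P := ⟨Pm F m (P : (Fin d → ℂ) × (Fin k → ℂ)),
        pm_mem_defBasis F β P.2 hC⟩) hC2,
        monActZ_eq_single F β (cond_add_of F β i hC hC2)]
      congr 1
      exact Subtype.ext (pm_comp F m (eE i) (P : (Fin d → ℂ) × (Fin k → ℂ)))
    · rw [monActZ_eq_zero F β (P := ⟨Pm F m (P : (Fin d → ℂ) × (Fin k → ℂ)),
        pm_mem_defBasis F β P.2 hC⟩) hC2,
        monActZ_eq_zero F β (fun h => hC2 (cond_of_add₂ F β i h))]
  · rw [monActZ_eq_zero F β hC, map_zero,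
      monActZ_eq_zero F β (fun h => hC (cond_of_add₁ F β i h))]

lemma topZ_topZ (i i' : Fin k) (x : MbetaZ F β) :
    TopZ F β i (TopZ F β i' x) = TopZ F β i' (TopZ F β i x) := by
  induction x using Finsupp.induction_linear with
  | zero => simp
  | add f g hf hg => rw [map_add, map_add, hf, hg, map_add, map_add]
  | single P c =>
    rw [topZ_single, map_smul, topZ_monActZ, topZ_single, map_smul, topZ_monActZ]
    have h9 : (fun i'' => eE i' i'' + eE i i'') = (fun i'' => eE i i'' + eE i' i'') :=
      funext fun _ => add_comm _ _
    rw [h9]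

lemma topZ_zopZ (i : Fin k) (gj : (Fin d → ℤ) →ₗ[ℤ] ℤ) (x : MbetaZ F β) :
    TopZ F β i (ZopZ F β gj x) = ZopZ F β gj (TopZ F β i x) := by
  unfold ZopZ
  simp only [LinearMap.sum_apply, LinearMap.smul_apply, map_sum, map_smul]
  exact Finset.sum_congr rfl fun i' _ => by rw [topZ_topZ]

lemma topZ_mem_zsub (g : Fin d → ((Fin d → ℤ) →ₗ[ℤ] ℤ)) (i : Fin k) {x : MbetaZ F β}
    (hx : x ∈ ZsubZ F β g) : TopZ F β i x ∈ ZsubZ F β g := by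
  refine Submodule.iSup_induction (motive := fun y => TopZ F β i y ∈ ZsubZ F β g) _ hx ?_ ?_ ?_
  · rintro j y ⟨z, rfl⟩
    show TopZ F β i (ZopZ F β (g j) z) ∈ ZsubZ F β g
    exact Submodule.mem_iSup_of_mem j ⟨TopZ F β i z, (topZ_zopZ F β i (g j) z).symm⟩
  · show TopZ F β i 0 ∈ ZsubZ F β g
    rw [map_zero]; exact zero_mem _
  · intro a b ha hb
    show TopZ F β i (a + b) ∈ ZsubZ F β g
    rw [map_add]; exact add_mem ha hb

end Mult

section Psi

variable {d k : ℕ} (F : StackyFan d k) (β : Fin d → ℂ)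

lemma psi_sum_sub (P : ↥(DefBasis F β)) (f : MvPolynomial (Fin k) ℤ)
    {T : Finset ((Fin k) →₀ ℕ)} (hT : f.support ⊆ T) :
    (f.support.sum fun m => MvPolynomial.coeff m f • monActZ F β (fun i => m i) P)
      = T.sum fun m => MvPolynomial.coeff m f • monActZ F β (fun i => m i) P :=
  Finset.sum_subset hT fun m _ hm => by
    rw [MvPolynomial.notMem_support_iff.mp hm, zero_smul]

/-- The `S_𝚺`-module map `S_𝚺 → ℤ[𝚺;β]` sending `f` to `f ⬝ [P]`. -/
noncomputable def psiL (P : ↥(DefBasis F β)) : MvPolynomial (Fin k) ℤ →ₗ[ℤ] MbetaZ F β where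
  toFun f := f.support.sum fun m => MvPolynomial.coeff m f • monActZ F β (fun i => m i) P
  map_add' f g := by
    classical
    rw [psi_sum_sub F β P (f + g) (MvPolynomial.support_add),
      psi_sum_sub F β P f (Finset.subset_union_left),
      psi_sum_sub F β P g (Finset.subset_union_right), ← Finset.sum_add_distrib]
    exact Finset.sum_congr rfl fun m _ => by rw [MvPolynomial.coeff_add, add_smul]
  map_smul' c f := by
    rw [psi_sum_sub F β P (c • f) (MvPolynomial.support_smul), RingHom.id_apply,
      Finset.smul_sum]
    exact Finset.sum_congr rfl fun m _ => by
      rw [MvPolynomial.coeff_smul, smul_assoc]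

lemma psi_apply (P : ↥(DefBasis F β)) (f : MvPolynomial (Fin k) ℤ) :
    psiL F β P f = f.support.sum fun m => MvPolynomial.coeff m f • monActZ F β (fun i => m i) P :=
  rfl

lemma psi_monomial (P : ↥(DefBasis F β)) (u : (Fin k) →₀ ℕ) (c : ℤ) :
    psiL F β P (MvPolynomial.monomial u c) = c • monActZ F β (fun i => u i) P := by
  rw [psi_apply, psi_sum_sub F β P _ (MvPolynomial.support_monomial_subset),
    Finset.sum_singleton, MvPolynomial.coeff_monomial, if_pos rfl]

lemma psi_X_mul (P : ↥(DefBasis F β)) (i : Fin k) (f : MvPolynomial (Fin k) ℤ) :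
    psiL F β P (MvPolynomial.X i * f) = TopZ F β i (psiL F β P f) := by
  induction f using MvPolynomial.induction_on' with
  | add p q hp hq => rw [mul_add, map_add, map_add, hp, hq, map_add]
  | monomial u c =>
    have hX : (MvPolynomial.X i * MvPolynomial.monomial u c : MvPolynomial (Fin k) ℤ)
        = MvPolynomial.monomial (Finsupp.single i 1 + u) c := by
      rw [MvPolynomial.monomial_single_add, pow_one]
    rw [hX, psi_monomial, psi_monomial, map_smul, topZ_monActZ]
    congr 1
    have he : (fun i' => (Finsupp.single i 1 + u : (Fin k) →₀ ℕ) i')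
        = (fun i' => u i' + eE i i') := by
      funext i'
      show (Finsupp.single i 1 + u : (Fin k) →₀ ℕ) i' = u i' + eE i i'
      rw [Finsupp.add_apply, Finsupp.single_apply]
      show (if i = i' then 1 else 0) + u i' = u i' + (if i' = i then 1 else 0)
      by_cases h : i = i'
      · rw [if_pos h, if_pos h.symm, add_comm]
      · rw [if_neg h, if_neg (fun h' => h h'.symm), add_comm]
    rw [he]

lemma basePt_mem {α : Fin k → ℂ} (hα : α ∈ Bx F β) : (bxPoint F α, α) ∈ DefBasis F β := by
  obtain ⟨I, hmax, hbx⟩ := hα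
  obtain ⟨n, hn⟩ := hbx.2.2
  exact ⟨⟨n, fun j => hn j⟩, I, hmax, hbx,
    ⟨fun _ => 0, fun _ _ => rfl, fun j => by
      show bxPoint F α j = _
      unfold bxPoint
      simp⟩⟩

/-- The distinguished basis element `[∑ αᵢvᵢ, α]`. -/
noncomputable def basePt (α : ↥(Bx F β)) : ↥(DefBasis F β) :=
  ⟨(bxPoint F (α : Fin k → ℂ), (α : Fin k → ℂ)), basePt_mem F β α.2⟩

lemma cond_zero (α : ↥(Bx F β)) :
    Cond F β (fun _ => 0) ((basePt F β α : ↥(DefBasis F β)) : (Fin d → ℂ) × (Fin k → ℂ)) := by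
  obtain ⟨I, hmax, hbx⟩ := α.2
  have hs : shiftMem F I (α : Fin k → ℂ) (bxPoint F (α : Fin k → ℂ)) :=
    ⟨fun _ => 0, fun _ _ => rfl, fun j => by
      show bxPoint F (α : Fin k → ℂ) j = _
      unfold bxPoint
      simp⟩
  refine ⟨I, hmax, fun _ _ => rfl, hbx, hs, ?_⟩
  have hP : (Pm F (fun _ => 0)
        ((basePt F β α : ↥(DefBasis F β)) : (Fin d → ℂ) × (Fin k → ℂ))).1
      = bxPoint F (α : Fin k → ℂ) :=
    congrArg Prod.fst (pm_zero F _)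
  rw [hP]
  exact hs

lemma psi_one (α : ↥(Bx F β)) :
    psiL F β (basePt F β α) 1 = Finsupp.single (basePt F β α) 1 := by
  rw [show (1 : MvPolynomial (Fin k) ℤ) = MvPolynomial.monomial 0 1 by
    rw [MvPolynomial.monomial_zero', MvPolynomial.C_1]]
  rw [psi_monomial, one_smul,
    show (fun i => ((0 : (Fin k) →₀ ℕ) i)) = (fun _ : Fin k => (0 : ℕ)) from rfl,
    monActZ_eq_single F β (cond_zero F β α)]
  congr 1
  exact Subtype.ext (pm_zero F _)

lemma mem_skerZ_iff (α : ↥(Bx F β)) (f : MvPolynomial (Fin k) ℤ) :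
    f ∈ SkerZ F β (α : Fin k → ℂ) ↔ psiL F β (basePt F β α) f = 0 := by
  constructor
  · intro h
    exact h (basePt F β α).2
  · intro h _
    exact h

lemma psi_mul_mem (g : Fin d → ((Fin d → ℤ) →ₗ[ℤ] ℤ)) (α : ↥(Bx F β)) :
    ∀ a x : MvPolynomial (Fin k) ℤ,
      psiL F β (basePt F β α) x ∈ ZsubZ F β g →
        psiL F β (basePt F β α) (a * x) ∈ ZsubZ F β g := by
  intro a
  induction a using MvPolynomial.induction_on with
  | C c =>
    intro x hx
    rw [← MvPolynomial.smul_eq_C_mul, map_smul]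
    exact Submodule.smul_mem _ _ hx
  | add p q hp hq =>
    intro x hx
    rw [add_mul, map_add]
    exact add_mem (hp x hx) (hq x hx)
  | mul_X p i hp =>
    intro x hx
    rw [mul_assoc]
    exact hp _ (by rw [psi_X_mul]; exact topZ_mem_zsub F β g i hx)

end Psi

section Rep

variable {d k : ℕ} (F : StackyFan d k) (β : Fin d → ℂ)

lemma rep_exists (P : ↥(DefBasis F β)) :
    ∃ h : (P : (Fin d → ℂ) × (Fin k → ℂ)).2 ∈ Bx F β, ∃ m : Fin k → ℕ,
      monActZ F β m (basePt F β ⟨(P : (Fin d → ℂ) × (Fin k → ℂ)).2, h⟩)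
        = Finsupp.single P 1 := by
  obtain ⟨hn, I, hmax, hbx, ⟨m, hm0, hms⟩⟩ := P.2
  refine ⟨⟨I, hmax, hbx⟩, m, ?_⟩
  set α : Fin k → ℂ := (P : (Fin d → ℂ) × (Fin k → ℂ)).2 with hα
  have hbase : ((basePt F β ⟨α, ⟨I, hmax, hbx⟩⟩ : ↥(DefBasis F β))
      : (Fin d → ℂ) × (Fin k → ℂ)) = (bxPoint F α, α) := rfl
  have hsum0 : ∀ j, bxPoint F α j = ∑ i, (α i + ((0 : ℕ) : ℂ)) * (F.v i j : ℂ) := by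
    intro j
    unfold bxPoint
    simp
  have hC : Cond F β m (bxPoint F α, α) := by
    refine ⟨I, hmax, hm0, hbx, ⟨fun _ => 0, fun _ _ => rfl, fun j => hsum0 j⟩,
      ⟨m, hm0, fun j => ?_⟩⟩
    show ((∑ i, (m i : ℤ) * F.v i j : ℤ) : ℂ) + bxPoint F α j = _
    rw [hsum0 j, sum_shift]
    exact Finset.sum_congr rfl fun i _ => by norm_num
  rw [monActZ_eq_single F β (P := basePt F β ⟨α, ⟨I, hmax, hbx⟩⟩) hC]
  congr 1
  apply Subtype.ext
  refine Prod.ext (funext fun j => ?_) rfl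
  show ((∑ i, (m i : ℤ) * F.v i j : ℤ) : ℂ) + bxPoint F α j
      = (P : (Fin d → ℂ) × (Fin k → ℂ)).1 j
  rw [hsum0 j, sum_shift, hms j]
  exact Finset.sum_congr rfl fun i _ => by norm_num

/-- The box element under a given basis element. -/
noncomputable def bxOf (P : ↥(DefBasis F β)) : ↥(Bx F β) :=
  ⟨(P : (Fin d → ℂ) × (Fin k → ℂ)).2, (rep_exists F β P).choose⟩

/-- An exponent vector producing a given basis element from its base point. -/
noncomputable def expOf (P : ↥(DefBasis F β)) : Fin k → ℕ :=
  (rep_exists F β P).choose_spec.choose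

lemma expOf_spec (P : ↥(DefBasis F β)) :
    monActZ F β (expOf F β P) (basePt F β (bxOf F β P)) = Finsupp.single P 1 :=
  (rep_exists F β P).choose_spec.choose_spec

/-- `expOf` as a finitely supported function. -/
noncomputable def finM (P : ↥(DefBasis F β)) : (Fin k) →₀ ℕ :=
  Finsupp.equivFunOnFinite.symm (expOf F β P)

lemma psi_finM (P : ↥(DefBasis F β)) :
    psiL F β (basePt F β (bxOf F β P)) (MvPolynomial.monomial (finM F β P) 1)
      = Finsupp.single P 1 := by
  rw [psi_monomial, one_smul]
  rw [show (fun i => (finM F β P) i) = expOf F β P from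
    Finsupp.equivFunOnFinite.apply_symm_apply (expOf F β P)]
  exact expOf_spec F β P

lemma psi_N_sub (g : Fin d → ((Fin d → ℤ) →ₗ[ℤ] ℤ)) (α : ↥(Bx F β)) :
    ∀ f ∈ NalphaZ F β g (α : Fin k → ℂ), psiL F β (basePt F β α) f ∈ ZsubZ F β g := by
  intro f hf
  have hf' : f ∈ Ideal.span (SkerZ F β (α : Fin k → ℂ) ∪
      {p | ∃ j, p = ∑ i, MvPolynomial.C (g j (F.v i)) * MvPolynomial.X i}) := hf
  clear hf
  induction hf' using Submodule.span_induction with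
  | mem x hx =>
    rcases hx with hx | ⟨j, rfl⟩
    · rw [(mem_skerZ_iff F β α x).mp hx]
      exact zero_mem _
    · have hz : psiL F β (basePt F β α)
          (∑ i, MvPolynomial.C (g j (F.v i)) * MvPolynomial.X i)
          = ZopZ F β (g j) (Finsupp.single (basePt F β α) 1) := by
        rw [map_sum]
        show _ = (∑ i, ((g j (F.v i) : ℤ) • TopZ F β i)) (Finsupp.single (basePt F β α) 1)
        rw [LinearMap.sum_apply]
        refine Finset.sum_congr rfl fun i _ => ?_
        rw [LinearMap.smul_apply, ← MvPolynomial.smul_eq_C_mul, map_smul]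
        congr 1
        rw [show (MvPolynomial.X i : MvPolynomial (Fin k) ℤ) = MvPolynomial.X i * 1 from
          (mul_one _).symm, psi_X_mul, psi_one]
      rw [hz]
      exact Submodule.mem_iSup_of_mem j ⟨_, rfl⟩
  | zero =>
    rw [map_zero]
    exact zero_mem _
  | add x y hx hy ihx ihy =>
    rw [map_add]
    exact add_mem ihx ihy
  | smul a x hx ih =>
    rw [smul_eq_mul]
    exact psi_mul_mem F β g α a x ih

end Rep

section Theta

variable {d k : ℕ} (F : StackyFan d k) (β : Fin d → ℂ)
  (g : Fin d → ((Fin d → ℤ) →ₗ[ℤ] ℤ)) [DecidableEq ↥(Bx F β)]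

lemma mk_eq_of_psi (α : ↥(Bx F β)) {f f' : MvPolynomial (Fin k) ℤ}
    (h : psiL F β (basePt F β α) f = psiL F β (basePt F β α) f') :
    (Submodule.Quotient.mk f : MvPolynomial (Fin k) ℤ ⧸ NalphaZ F β g (α : Fin k → ℂ))
      = Submodule.Quotient.mk f' := by
  rw [Submodule.Quotient.eq]
  exact Ideal.subset_span (Or.inl ((mem_skerZ_iff F β α _).mpr
    (by rw [map_sub, h, sub_self])))

/-- The inverse map `ℤ[𝚺;β] → ⊕_α S/(Z + S(α))` on the free module. -/
noncomputable def Theta0 : MbetaZ F β →ₗ[ℤ]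
    ⨁ α : ↥(Bx F β), MvPolynomial (Fin k) ℤ ⧸ NalphaZ F β g (α : Fin k → ℂ) :=
  Finsupp.lsum ℤ fun P => LinearMap.toSpanSingleton ℤ _
    (DirectSum.lof ℤ ↥(Bx F β)
      (fun α => MvPolynomial (Fin k) ℤ ⧸ NalphaZ F β g (α : Fin k → ℂ)) (bxOf F β P)
      (Submodule.Quotient.mk (MvPolynomial.monomial (finM F β P) 1)))

lemma theta0_single (P : ↥(DefBasis F β)) (c : ℤ) :
    Theta0 F β g (Finsupp.single P c)
      = c • DirectSum.lof ℤ ↥(Bx F β)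
          (fun α => MvPolynomial (Fin k) ℤ ⧸ NalphaZ F β g (α : Fin k → ℂ)) (bxOf F β P)
          (Submodule.Quotient.mk (MvPolynomial.monomial (finM F β P) 1)) := by
  unfold Theta0
  rw [Finsupp.lsum_single, LinearMap.toSpanSingleton_apply]

lemma theta0_monActZ_eE (i : Fin k) (P : ↥(DefBasis F β)) :
    Theta0 F β g (monActZ F β (eE i) P)
      = DirectSum.lof ℤ ↥(Bx F β)
          (fun α => MvPolynomial (Fin k) ℤ ⧸ NalphaZ F β g (α : Fin k → ℂ)) (bxOf F β P)
          (Submodule.Quotient.mk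
            (MvPolynomial.X i * MvPolynomial.monomial (finM F β P) 1)) := by
  by_cases hC : Cond F β (eE i) (P : (Fin d → ℂ) × (Fin k → ℂ))
  · rw [monActZ_eq_single F β hC, theta0_single, one_smul]
    set Q : ↥(DefBasis F β) :=
      ⟨Pm F (eE i) (P : (Fin d → ℂ) × (Fin k → ℂ)), pm_mem_defBasis F β P.2 hC⟩ with hQdef
    show DirectSum.lof ℤ ↥(Bx F β)
        (fun α => MvPolynomial (Fin k) ℤ ⧸ NalphaZ F β g (α : Fin k → ℂ)) (bxOf F β P)
        (Submodule.Quotient.mk (MvPolynomial.monomial (finM F β Q) 1)) = _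
    refine congrArg _ (mk_eq_of_psi F β g (bxOf F β P) ?_)
    have h1 : psiL F β (basePt F β (bxOf F β P)) (MvPolynomial.monomial (finM F β Q) 1)
        = Finsupp.single Q 1 := psi_finM F β Q
    have h2 : psiL F β (basePt F β (bxOf F β P)) (MvPolynomial.monomial (finM F β P) 1)
        = Finsupp.single P 1 := psi_finM F β P
    rw [h1, psi_X_mul, h2, topZ_single, one_smul, monActZ_eq_single F β hC]
  · rw [monActZ_eq_zero F β hC, map_zero]
    have h0 : (Submodule.Quotient.mk
        (MvPolynomial.X i * MvPolynomial.monomial (finM F β P) 1)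
          : MvPolynomial (Fin k) ℤ ⧸ NalphaZ F β g ((bxOf F β P : ↥(Bx F β)) : Fin k → ℂ))
        = Submodule.Quotient.mk 0 := by
      apply mk_eq_of_psi
      have h2 : psiL F β (basePt F β (bxOf F β P)) (MvPolynomial.monomial (finM F β P) 1)
          = Finsupp.single P 1 := psi_finM F β P
      rw [map_zero, psi_X_mul, h2, topZ_single, one_smul, monActZ_eq_zero F β hC]
    rw [h0, Submodule.Quotient.mk_zero, map_zero]

lemma zsub_le_ker_theta0 : ZsubZ F β g ≤ LinearMap.ker (Theta0 F β g) := by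
  refine iSup_le fun j => ?_
  rintro x ⟨y, rfl⟩
  rw [LinearMap.mem_ker]
  induction y using Finsupp.induction_linear with
  | zero => rw [map_zero, map_zero]
  | add f h hf hh => rw [map_add, map_add, hf, hh, add_zero]
  | single P c =>
    have hz : ZopZ F β (g j) (Finsupp.single P c)
        = ∑ i, (g j (F.v i) : ℤ) • (c • monActZ F β (eE i) P) := by
      show (∑ i, ((g j (F.v i) : ℤ) • TopZ F β i)) (Finsupp.single P c) = _
      rw [LinearMap.sum_apply]
      exact Finset.sum_congr rfl fun i _ => by rw [LinearMap.smul_apply, topZ_single]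
    rw [hz, map_sum]
    have hterm : ∀ i : Fin k, Theta0 F β g ((g j (F.v i) : ℤ) • (c • monActZ F β (eE i) P))
        = DirectSum.lof ℤ ↥(Bx F β)
            (fun α => MvPolynomial (Fin k) ℤ ⧸ NalphaZ F β g (α : Fin k → ℂ)) (bxOf F β P)
            (Submodule.Quotient.mk ((c * g j (F.v i)) •
              (MvPolynomial.X i * MvPolynomial.monomial (finM F β P) 1))) := by
      intro i
      rw [map_smul, map_smul, theta0_monActZ_eE, smul_smul,
        Submodule.Quotient.mk_smul, map_smul, mul_comm]
    rw [Finset.sum_congr rfl fun i _ => hterm i, ← map_sum]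
    have hmk : (∑ i, (Submodule.Quotient.mk ((c * g j (F.v i)) •
          (MvPolynomial.X i * MvPolynomial.monomial (finM F β P) 1))
            : MvPolynomial (Fin k) ℤ ⧸ NalphaZ F β g ((bxOf F β P : ↥(Bx F β)) : Fin k → ℂ)))
        = Submodule.Quotient.mk (∑ i, (c * g j (F.v i)) •
            (MvPolynomial.X i * MvPolynomial.monomial (finM F β P) 1)) :=
      (map_sum (Submodule.mkQ (NalphaZ F β g ((bxOf F β P : ↥(Bx F β)) : Fin k → ℂ)))
        (fun i => (c * g j (F.v i)) •
          (MvPolynomial.X i * MvPolynomial.monomial (finM F β P) 1)) Finset.univ).symm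
    rw [hmk]
    have hN : (∑ i, (c * g j (F.v i)) •
          (MvPolynomial.X i * MvPolynomial.monomial (finM F β P) 1))
        ∈ NalphaZ F β g ((bxOf F β P : ↥(Bx F β)) : Fin k → ℂ) := by
      have hgen : (∑ i, MvPolynomial.C (g j (F.v i)) * MvPolynomial.X i)
          ∈ Ideal.span (SkerZ F β ((bxOf F β P : ↥(Bx F β)) : Fin k → ℂ) ∪
            {p | ∃ j, p = ∑ i, MvPolynomial.C (g j (F.v i)) * MvPolynomial.X i}) :=
        Ideal.subset_span (Or.inr ⟨j, rfl⟩)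
      have heq : (∑ i, (c * g j (F.v i)) •
            (MvPolynomial.X i * MvPolynomial.monomial (finM F β P) 1))
          = (MvPolynomial.C c * MvPolynomial.monomial (finM F β P) 1) *
              ∑ i, MvPolynomial.C (g j (F.v i)) * MvPolynomial.X i := by
        rw [Finset.mul_sum]
        refine Finset.sum_congr rfl fun i _ => ?_
        rw [MvPolynomial.smul_eq_C_mul, map_mul]
        ring
      rw [heq]
      exact Ideal.mul_mem_left _ _ hgen
    rw [(Submodule.Quotient.mk_eq_zero _).mpr hN, map_zero]

lemma theta0_psi (α : ↥(Bx F β)) (f : MvPolynomial (Fin k) ℤ) :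
    Theta0 F β g (psiL F β (basePt F β α) f)
      = DirectSum.lof ℤ ↥(Bx F β)
          (fun α' => MvPolynomial (Fin k) ℤ ⧸ NalphaZ F β g (α' : Fin k → ℂ)) α
          (Submodule.Quotient.mk f) := by
  induction f using MvPolynomial.induction_on' with
  | add p q hp hq =>
    rw [map_add, map_add, hp, hq, ← map_add, Submodule.Quotient.mk_add]
  | monomial u c =>
    rw [psi_monomial, map_smul]
    by_cases hC : Cond F β (fun i => u i)
        ((basePt F β α : ↥(DefBasis F β)) : (Fin d → ℂ) × (Fin k → ℂ))
    · rw [monActZ_eq_single F β hC, theta0_single, one_smul]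
      set Q : ↥(DefBasis F β) :=
        ⟨Pm F (fun i => u i) ((basePt F β α : ↥(DefBasis F β)) : (Fin d → ℂ) × (Fin k → ℂ)),
          pm_mem_defBasis F β (basePt F β α).2 hC⟩ with hQdef
      show c • DirectSum.lof ℤ ↥(Bx F β)
          (fun α' => MvPolynomial (Fin k) ℤ ⧸ NalphaZ F β g (α' : Fin k → ℂ)) α
          (Submodule.Quotient.mk (MvPolynomial.monomial (finM F β Q) 1)) = _
      rw [← map_smul, ← Submodule.Quotient.mk_smul]
      refine congrArg _ (mk_eq_of_psi F β g α ?_)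
      have h1 : psiL F β (basePt F β α) (MvPolynomial.monomial (finM F β Q) 1)
          = Finsupp.single Q 1 := psi_finM F β Q
      rw [map_smul, h1, psi_monomial, monActZ_eq_single F β hC]
    · rw [monActZ_eq_zero F β hC, map_zero, smul_zero]
      have h0 : (Submodule.Quotient.mk (MvPolynomial.monomial u c)
            : MvPolynomial (Fin k) ℤ ⧸ NalphaZ F β g (α : Fin k → ℂ))
          = Submodule.Quotient.mk 0 := by
        apply mk_eq_of_psi
        rw [map_zero, psi_monomial, monActZ_eq_zero F β hC, smul_zero]
      rw [h0, Submodule.Quotient.mk_zero, map_zero]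

end Theta

/-- **Decomposition (2.9)/(§3).** The deformed SR-cohomology module decomposes as
`Hℤ(𝚺;β) ≅ ⊕_{α ∈ Bx(𝚺;β)} S_𝚺/(Z + S_𝚺(α))`. -/
theorem statement8 (F : StackyFan d k) (hrays : HasAllRays F) (β : Fin d → ℂ)
    (g : Fin d → ((Fin d → ℤ) →ₗ[ℤ] ℤ))
    (hg : Submodule.span ℤ (Set.range g) = ⊤) :
    Nonempty (HmodZ F β g ≃ₗ[ℤ]
      (⨁ α : ↥(Bx F β), MvPolynomial (Fin k) ℤ ⧸ NalphaZ F β g (α : Fin k → ℂ))) := by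
  classical
  have W1 : ∀ α : ↥(Bx F β), NalphaZ F β g (α : Fin k → ℂ) ≤
      LinearMap.ker ((ZsubZ F β g).mkQ ∘ₗ psiL F β (basePt F β α)) := by
    intro α f hf
    rw [LinearMap.mem_ker, LinearMap.comp_apply, Submodule.mkQ_apply,
      Submodule.Quotient.mk_eq_zero]
    exact psi_N_sub F β g α f hf
  refine ⟨AddEquiv.toIntLinearEquiv (LinearEquiv.toAddEquiv (LinearEquiv.ofLinear
    (Submodule.liftQ (R₂ := ℤ) (τ₁₂ := RingHom.id ℤ) (M₂ := ⨁ α : ↥(Bx F β), MvPolynomial (Fin k) ℤ ⧸ NalphaZ F β g (α : Fin k → ℂ)) _ (Theta0 F β g) (zsub_le_ker_theta0 F β g))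
    (DirectSum.toModule ℤ ↥(Bx F β) (HmodZ F β g)
      (fun α => Submodule.liftQ _ ((ZsubZ F β g).mkQ ∘ₗ psiL F β (basePt F β α)) (W1 α)))
    ?_ ?_))⟩
  · apply LinearMap.ext
    intro x
    rw [LinearMap.comp_apply, LinearMap.id_apply]
    induction x using DirectSum.induction_on with
    | zero => rw [map_zero, map_zero]
    | add a b ha hb => rw [map_add, map_add, ha, hb]
    | of α y =>
      obtain ⟨f, rfl⟩ := Submodule.Quotient.mk_surjective _ y
      rw [← DirectSum.lof_eq_of ℤ, DirectSum.toModule_lof, Submodule.liftQ_apply,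
        LinearMap.comp_apply, Submodule.mkQ_apply, Submodule.liftQ_apply,
        theta0_psi]
  · apply LinearMap.ext
    intro x
    rw [LinearMap.comp_apply, LinearMap.id_apply]
    obtain ⟨y, rfl⟩ := Submodule.Quotient.mk_surjective _ x
    rw [Submodule.liftQ_apply]
    induction y using Finsupp.induction_linear with
    | zero => rw [map_zero, map_zero, Submodule.Quotient.mk_zero]
    | add f h hf hh => rw [map_add, map_add, hf, hh, Submodule.Quotient.mk_add]
    | single P c =>
      rw [theta0_single, map_smul, DirectSum.toModule_lof, Submodule.liftQ_apply,
        LinearMap.comp_apply, Submodule.mkQ_apply, psi_finM,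
        ← Submodule.Quotient.mk_smul, Finsupp.smul_single, smul_eq_mul, mul_one]


end GKZpaper
end

section
/- In the setting of the Γ-series construction for the better behaved GKZ system: for any basis element [w] of the shadow module ℂ[𝚺;β_δ]_{Re β}, there exist a maximal cone σ of Σ, a unique element c(α_δ) ∈ Box(σ;β_δ), an element v ∈ K ∩ N, and l = (l_i) ∈ L(α,v) with l_i = 0 for i ∉ I(σ), such that w ∈ c(α_δ) + Σ_{i : l_i ∈ ℤ_{<0}} v_i + Σ_{i∈I(σ)} ℤ_{≥0} v_i. -/
namespace GKZpaper

variable {d k : ℕ}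

/-- The cone `K ⊂ N ⊗ ℝ` over `Δ = conv(𝒜)`: the nonnegative span of the `vᵢ`. -/
def Kcone (v : Fin k → Fin d → ℤ) : Set (Fin d → ℝ) :=
  {x | ∃ c : Fin k → ℝ, (∀ i, 0 ≤ c i) ∧ ∀ j, x j = ∑ i, c i * (v i j : ℝ)}

/-- `I(𝚺)`: the indices `i` such that `vᵢ` generates a ray of the fan. -/
def raysIdx (F : StackyFan d k) : Set (Fin k) := {i | {i} ∈ F.cones}

/-- The lattice points of `K`. -/
def latticeK (v : Fin k → Fin d → ℤ) : Set (Fin d → ℤ) := {n | intPt n ∈ Kcone v}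

/-- The setting of §4: `𝒜 = {v₁,…,v_k}` generates `N` as a group, `deg(vᵢ) = 1` for a
homomorphism `deg : N → ℤ`, and `Σ` is a fan coming from a regular triangulation of
`Δ = conv 𝒜`, with support `K` and rays among the `vᵢ`. -/
structure GKZSetting (d k : ℕ) where
  F : StackyFan d k
  deg : (Fin d → ℤ) →ₗ[ℤ] ℤ
  hdeg : ∀ i, deg (F.v i) = 1
  hgen : Submodule.span ℤ (Set.range F.v) = ⊤
  hsupp : support F = Kcone F.v
  /-- regularity of the triangulation: a convex piecewise linear support function,
  linear exactly on the maximal cones. -/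
  hreg : ∃ η : (Fin d → ℝ) → ℝ, ConvexOn ℝ (Kcone F.v) η ∧
    ∀ I, IsMaxCone F I → ∃ L : (Fin d → ℝ) →ₗ[ℝ] ℝ,
      (∀ x ∈ realCone F.v I, η x = L x) ∧
      ∀ x ∈ Kcone F.v, x ∉ realCone F.v I → L x < η x

/-- The set `L(α,v)` of Definition 4.3: tuples `l` with `∑ lᵢ vᵢ = β - v` and
`lᵢ - αᵢ ∈ ℤ` for all `i`. -/
def Lset (v : Fin k → Fin d → ℤ) (β : Fin d → ℂ) (α : Fin k → ℂ) (w : Fin d → ℤ) :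
    Set (Fin k → ℂ) :=
  {l | (∀ j, ∑ i, l i * (v i j : ℂ) = β j - (w j : ℂ)) ∧ ∀ i, ∃ z : ℤ, l i - α i = (z : ℂ)}

/-- The generating points of the shadow module `ℂ[𝚺;χ]_ξ`: the points `w = n + χ` of `K`
with `w + εξ ∈ K` for all sufficiently small `ε > 0`. -/
def ShadowPts (F : StackyFan d k) (χ ξ : Fin d → ℝ) : Set (Fin d → ℝ) :=
  {w | (∃ n : Fin d → ℤ, ∀ j, w j = (n j : ℝ) + χ j) ∧ w ∈ Kcone F.v ∧
    ∃ ε₀ : ℝ, 0 < ε₀ ∧ ∀ ε : ℝ, 0 < ε → ε ≤ ε₀ →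
      (fun j => w j + ε * ξ j) ∈ Kcone F.v}

/-- `Re β`. -/
def rePt (β : Fin d → ℂ) : Fin d → ℝ := fun j => (β j).re

end GKZpaper

namespace GKZpaper

section Helpers

open Filter Topology

variable {d k : ℕ}

/-- real versions of the lattice vectors -/
private def rv (v : Fin k → Fin d → ℤ) (i : Fin k) : Fin d → ℝ := fun j => (v i j : ℝ)

private lemma sum_restrict (I : Finset (Fin k)) (c : Fin k → ℝ) (hc : ∀ i ∉ I, c i = 0)
    (f : Fin k → ℝ) : ∑ i, c i * f i = ∑ i ∈ I, c i * f i :=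
  (Finset.sum_subset (Finset.subset_univ I)
    (fun i _ hi => by rw [hc i hi, zero_mul])).symm

private lemma sum_restrict' (I : Finset (Fin k)) (c : Fin k → ℝ) (hc : ∀ i ∉ I, c i = 0)
    (f : Fin k → ℝ) : ∑ i, c i * f i = ∑ i : {x // x ∈ I}, c i.1 * f i.1 := by
  rw [sum_restrict I c hc f, Finset.univ_eq_attach, Finset.sum_attach I (fun i => c i * f i)]

private lemma extend_sum (I : Finset (Fin k)) (c : {x // x ∈ I} → ℝ) (f : Fin k → ℝ) :
    ∑ i, (if h : i ∈ I then c ⟨i, h⟩ else 0) * f i = ∑ i : {x // x ∈ I}, c i * f i.1 := by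
  rw [sum_restrict' I _ (fun i hi => dif_neg hi) f]
  exact Finset.sum_congr rfl (fun i _ => by rw [dif_pos i.2])

/-- uniqueness of coefficients on a simplicial cone -/
private lemma coeff_unique (F : StackyFan d k) {I : Finset (Fin k)} (hI : I ∈ F.cones)
    {a b : Fin k → ℝ} (ha : ∀ i ∉ I, a i = 0) (hb : ∀ i ∉ I, b i = 0)
    (h : ∀ j, ∑ i, a i * (F.v i j : ℝ) = ∑ i, b i * (F.v i j : ℝ)) : a = b := by
  have hli := Fintype.linearIndependent_iff.mp (F.simplicial I hI)
  have key : ∀ i : {x // x ∈ I}, a i.1 - b i.1 = 0 := by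
    apply hli (fun i => a i.1 - b i.1)
    funext j
    rw [Finset.sum_apply]
    have : ∀ i : {x // x ∈ I},
        (fun i : {x // x ∈ I} => (a i.1 - b i.1) • (fun j => (F.v i.1 j : ℝ) : Fin d → ℝ)) i j
          = a i.1 * (F.v i.1 j : ℝ) - b i.1 * (F.v i.1 j : ℝ) := by
      intro i; simp [sub_mul]
    rw [Finset.sum_congr rfl (fun i _ => this i), Finset.sum_sub_distrib,
      ← sum_restrict' I a ha (fun i => (F.v i j : ℝ)),
      ← sum_restrict' I b hb (fun i => (F.v i j : ℝ)), h j, sub_self]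
    rfl
  funext i
  by_cases hi : i ∈ I
  · exact sub_eq_zero.mp (key ⟨i, hi⟩)
  · rw [ha i hi, hb i hi]

private lemma realCone_subset_span (v : Fin k → Fin d → ℤ) (I : Finset (Fin k)) :
    realCone v I ⊆
      (Submodule.span ℝ (Set.range fun i : {x // x ∈ I} => rv v i.1) : Set (Fin d → ℝ)) := by
  rintro x ⟨c, -, hc0, hcs⟩
  rw [SetLike.mem_coe, Submodule.mem_span_range_iff_exists_fun]
  refine ⟨fun i => c i.1, ?_⟩
  funext j
  rw [Finset.sum_apply]
  have : ∀ i : {x // x ∈ I},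
      (fun i : {x // x ∈ I} => c i.1 • rv v i.1) i j = c i.1 * (v i.1 j : ℝ) := fun i => rfl
  rw [Finset.sum_congr rfl (fun i _ => this i), ← sum_restrict' I c hc0 (fun i => (v i j : ℝ))]
  exact (hcs j).symm

private lemma realCone_isClosed (F : StackyFan d k) {I : Finset (Fin k)} (hI : I ∈ F.cones) :
    IsClosed (realCone F.v I) := by
  set f : ({x // x ∈ I} → ℝ) →ₗ[ℝ] (Fin d → ℝ) :=
    { toFun := fun c => fun j => ∑ i : {x // x ∈ I}, c i * (F.v i.1 j : ℝ)
      map_add' := by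
        intro a b; funext j
        simp only [Pi.add_apply, add_mul, Finset.sum_add_distrib]
      map_smul' := by
        intro r a; funext j
        simp only [RingHom.id_apply, Pi.smul_apply, smul_eq_mul, Finset.mul_sum]
        exact Finset.sum_congr rfl (fun i _ => by ring) } with hf
  have hinj : LinearMap.ker f = ⊥ := by
    rw [LinearMap.ker_eq_bot']
    intro c hc
    have hli := Fintype.linearIndependent_iff.mp (F.simplicial I hI)
    funext i
    refine hli c ?_ i
    funext j
    rw [Finset.sum_apply]
    have : ∀ i : {x // x ∈ I},
        (fun i : {x // x ∈ I} => c i • (fun j => (F.v i.1 j : ℝ) : Fin d → ℝ)) i j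
          = c i * (F.v i.1 j : ℝ) := fun i => rfl
    rw [Finset.sum_congr rfl (fun i _ => this i)]
    exact congrFun hc j
  have hemb := LinearMap.isClosedEmbedding_of_injective hinj
  have hcl : IsClosed {c : {x // x ∈ I} → ℝ | ∀ i, 0 ≤ c i} := by
    have : {c : {x // x ∈ I} → ℝ | ∀ i, 0 ≤ c i} = ⋂ i, {c | 0 ≤ c i} := by
      ext c; simp
    rw [this]
    exact isClosed_iInter (fun i => isClosed_le continuous_const (continuous_apply i))
  have himg : realCone F.v I = f '' {c : {x // x ∈ I} → ℝ | ∀ i, 0 ≤ c i} := by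
    ext x
    constructor
    · rintro ⟨c, hc0, hcI, hcs⟩
      refine ⟨fun i => c i.1, fun i => hc0 i.1, ?_⟩
      funext j
      show ∑ i : {x // x ∈ I}, c i.1 * (F.v i.1 j : ℝ) = x j
      rw [← sum_restrict' I c hcI (fun i => (F.v i j : ℝ))]
      exact (hcs j).symm
    · rintro ⟨c, hc0, rfl⟩
      refine ⟨fun i => if h : i ∈ I then c ⟨i, h⟩ else 0, ?_, ?_, ?_⟩
      · intro i; by_cases h : i ∈ I
        · simp only [dif_pos h]; exact hc0 _
        · simp only [dif_neg h]; exact le_refl 0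
      · intro i hi; simp only [dif_neg hi]
      · intro j
        show (∑ i : {x // x ∈ I}, c i * (F.v i.1 j : ℝ)) = _
        rw [extend_sum I c (fun i => (F.v i j : ℝ))]
  rw [himg]
  exact hemb.isClosedMap _ hcl

private lemma realCone_mono (v : Fin k → Fin d → ℤ) {I J : Finset (Fin k)} (hIJ : I ⊆ J) :
    realCone v I ⊆ realCone v J := by
  rintro x ⟨c, hc0, hcI, hcs⟩
  exact ⟨c, hc0, fun i hi => hcI i (fun h => hi (hIJ h)), hcs⟩

private lemma exists_maxcone_above (F : StackyFan d k) {I : Finset (Fin k)} (hI : I ∈ F.cones) :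
    ∃ J, IsMaxCone F J ∧ I ⊆ J := by
  have hne : (F.cones.filter (fun J => I ⊆ J)).Nonempty :=
    ⟨I, Finset.mem_filter.mpr ⟨hI, Finset.Subset.refl I⟩⟩
  obtain ⟨J, hJmem, hJmax⟩ := Finset.exists_max_image _ (fun J => J.card) hne
  rw [Finset.mem_filter] at hJmem
  refine ⟨J, ⟨hJmem.1, ?_⟩, hJmem.2⟩
  intro J' hJ' hJJ'
  have hIJ' : I ⊆ J' := hJmem.2.trans hJJ'
  have := hJmax J' (Finset.mem_filter.mpr ⟨hJ', hIJ'⟩)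
  exact (Finset.eq_of_subset_of_card_le hJJ' this).symm

private lemma mem_maxcone_of_mem_K (F : StackyFan d k) (hsupp : support F = Kcone F.v)
    {x : Fin d → ℝ} (hx : x ∈ Kcone F.v) : ∃ J, IsMaxCone F J ∧ x ∈ realCone F.v J := by
  rw [← hsupp] at hx
  simp only [support, Set.mem_iUnion] at hx
  obtain ⟨I, hI, hxI⟩ := hx
  obtain ⟨J, hJmax, hIJ⟩ := exists_maxcone_above F hI
  exact ⟨J, hJmax, realCone_mono F.v hIJ hxI⟩

/-- pigeonhole/limit lemma: find one maximal cone containing `x` and `x + εu`. -/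
private lemma exists_maxcone_limit (F : StackyFan d k) (x u : Fin d → ℝ) {ε₀ : ℝ}
    (hε₀ : 0 < ε₀)
    (h : ∀ ε : ℝ, 0 < ε → ε ≤ ε₀ →
      ∃ J, IsMaxCone F J ∧ (fun j => x j + ε * u j) ∈ realCone F.v J) :
    ∃ J, IsMaxCone F J ∧ x ∈ realCone F.v J ∧
      ∃ ε : ℝ, 0 < ε ∧ (fun j => x j + ε * u j) ∈ realCone F.v J := by
  classical
  set εn : ℕ → ℝ := fun n => ε₀ * (1 / (n + 1)) with hεn
  have hεnpos : ∀ n : ℕ, 0 < εn n := fun n => by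
    apply mul_pos hε₀; positivity
  have hεnle : ∀ n : ℕ, εn n ≤ ε₀ := fun n => by
    rw [hεn]
    nth_rewrite 2 [← mul_one ε₀]
    apply mul_le_mul_of_nonneg_left _ hε₀.le
    rw [div_le_one (by positivity)]
    linarith [Nat.cast_nonneg (α := ℝ) n]
  choose G hGmax hGmem using fun n : ℕ => h (εn n) (hεnpos n) (hεnle n)
  obtain ⟨J, hJinf⟩ := Finite.exists_infinite_fiber G
  have hJinf' : {n : ℕ | G n = J}.Infinite := Set.infinite_coe_iff.mp hJinf
  obtain ⟨n₀, hn₀⟩ := hJinf'.nonempty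
  have hn₀' : G n₀ = J := hn₀
  have hJmax : IsMaxCone F J := hn₀' ▸ hGmax n₀
  have hJcone : J ∈ F.cones := hJmax.1
  refine ⟨J, hJmax, ?_, εn n₀, hεnpos n₀, by rw [← hn₀']; exact hGmem n₀⟩
  have hfreq : ∃ᶠ n : ℕ in atTop, (fun j => x j + εn n * u j) ∈ realCone F.v J := by
    rw [Nat.frequently_atTop_iff_infinite]
    apply hJinf'.mono
    intro n hn
    have hn' : G n = J := hn
    rw [← hn']
    exact hGmem n
  have htend : Tendsto (fun n : ℕ => (fun j => x j + εn n * u j)) atTop (𝓝 x) := by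
    rw [tendsto_pi_nhds]
    intro j
    have h0 : Tendsto εn atTop (𝓝 0) := by
      rw [hεn]
      have := tendsto_one_div_add_atTop_nhds_zero_nat.const_mul ε₀
      simpa using this
    have : Tendsto (fun n : ℕ => x j + εn n * u j) atTop (𝓝 (x j + 0 * u j)) :=
      tendsto_const_nhds.add (h0.mul_const (u j))
    simpa using this
  have := mem_closure_of_frequently_of_tendsto hfreq htend
  rwa [(realCone_isClosed F hJcone).closure_eq] at this

private lemma span_real_top (v : Fin k → Fin d → ℤ)
    (hgen : Submodule.span ℤ (Set.range v) = ⊤) :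
    Submodule.span ℝ (Set.range (rv v)) = ⊤ := by
  set V := Submodule.span ℝ (Set.range (rv v)) with hV
  have hint : ∀ nvec : Fin d → ℤ, (fun j => (nvec j : ℝ)) ∈ V := by
    intro nvec
    have hmem : nvec ∈ Submodule.span ℤ (Set.range v) := hgen ▸ Submodule.mem_top
    induction hmem using Submodule.span_induction with
    | mem y hy =>
        obtain ⟨i, rfl⟩ := hy
        exact Submodule.subset_span ⟨i, rfl⟩
    | zero =>
        have : (fun j => (((0 : Fin d → ℤ) j : ℤ) : ℝ)) = (0 : Fin d → ℝ) := by
          funext j; simp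
        rw [this]; exact V.zero_mem
    | add y z _ _ hy hz =>
        have : (fun j => (((y + z) j : ℤ) : ℝ))
            = (fun j => ((y j : ℤ) : ℝ)) + (fun j => ((z j : ℤ) : ℝ)) := by
          funext j; simp
        rw [this]; exact V.add_mem hy hz
    | smul z y _ hy =>
        have : (fun j => (((z • y) j : ℤ) : ℝ)) = (z : ℝ) • (fun j => ((y j : ℤ) : ℝ)) := by
          funext j; simp
        rw [this]; exact V.smul_mem _ hy
  rw [eq_top_iff]
  intro x _
  set en : Fin d → Fin d → ℤ := fun j => Pi.single j 1 with hen
  have hx : x = ∑ j : Fin d, x j • (fun j' => ((en j j' : ℤ) : ℝ)) := by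
    funext j'
    rw [Finset.sum_apply]
    have hterm : ∀ j : Fin d, (x j • fun j'' => ((en j j'' : ℤ) : ℝ)) j'
        = if j' = j then x j else 0 := by
      intro j
      simp only [Pi.smul_apply, smul_eq_mul, hen, Pi.single_apply]
      rcases eq_or_ne j' j with h | h
      · simp [h]
      · simp [h, Ne.symm h]
    rw [Finset.sum_congr rfl (fun j _ => hterm j), Finset.sum_ite_eq]
    simp
  rw [hx]
  exact V.sum_mem (fun j _ => V.smul_mem _ (hint (en j)))

/-- every maximal cone of the fan is full-dimensional -/
private lemma maxcone_span_top (F : StackyFan d k)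
    (hgen : Submodule.span ℤ (Set.range F.v) = ⊤) (hsupp : support F = Kcone F.v)
    {I : Finset (Fin k)} (hImax : IsMaxCone F I) :
    Submodule.span ℝ (Set.range fun i : {x // x ∈ I} => rv F.v i.1) = ⊤ := by
  classical
  set V := Submodule.span ℝ (Set.range fun i : {x // x ∈ I} => rv F.v i.1) with hV
  have hall : ∀ i₀ : Fin k, rv F.v i₀ ∈ V := by
    intro i₀
    by_contra hi₀
    set x₀ : Fin d → ℝ := fun j => ∑ i, (if i ∈ I then (1 : ℝ) else 0) * (F.v i j : ℝ)
      with hx₀def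
    have hx₀I : x₀ ∈ realCone F.v I :=
      ⟨fun i => if i ∈ I then 1 else 0, fun i => by dsimp only; split <;> norm_num,
        fun i hi => if_neg hi, fun j => rfl⟩
    have hKmem : ∀ ε : ℝ, 0 < ε → ε ≤ 1 →
        ∃ J, IsMaxCone F J ∧ (fun j => x₀ j + ε * rv F.v i₀ j) ∈ realCone F.v J := by
      intro ε hε _
      apply mem_maxcone_of_mem_K F hsupp
      refine ⟨fun i => (if i ∈ I then (1 : ℝ) else 0) + (if i = i₀ then ε else 0),
        fun i => by
          dsimp only
          apply add_nonneg
          · split <;> norm_num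
          · split
            · exact hε.le
            · exact le_refl 0, fun j => ?_⟩
      have : ∀ i : Fin k, ((if i ∈ I then (1:ℝ) else 0) + (if i = i₀ then ε else 0))
          * (F.v i j : ℝ) = (if i ∈ I then (1:ℝ) else 0) * (F.v i j : ℝ)
            + (if i = i₀ then ε * (F.v i j : ℝ) else 0) := by
        intro i; rcases eq_or_ne i i₀ with h | h <;> simp [h, add_mul]
      rw [Finset.sum_congr rfl (fun i _ => this i), Finset.sum_add_distrib,
        Finset.sum_ite_eq' Finset.univ i₀ (fun i => ε * (F.v i j : ℝ))]
      simp [rv, hx₀def]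
    obtain ⟨J, hJmax, hxJ, ε, hε, hxεJ⟩ :=
      exists_maxcone_limit F x₀ (rv F.v i₀) one_pos hKmem
    -- x₀ ∈ realCone I ∩ realCone J = realCone (I ∩ J), hence I ⊆ J, hence J = I
    have hxIJ : x₀ ∈ realCone F.v (I ∩ J) := by
      rw [← F.inter I hImax.1 J hJmax.1]; exact ⟨hx₀I, hxJ⟩
    obtain ⟨c, hc0, hcIJ, hcs⟩ := hxIJ
    have hceq : c = fun i => if i ∈ I then (1 : ℝ) else 0 := by
      apply coeff_unique F hImax.1
        (fun i hi => hcIJ i (fun h => hi (Finset.mem_of_mem_inter_left h)))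
        (fun i hi => if_neg hi)
      intro j; rw [← hcs j]
    have hIJ : I ⊆ J := by
      intro i hi
      by_contra hiJ
      have h0 : c i = 0 := hcIJ i (fun h => hiJ (Finset.mem_of_mem_inter_right h))
      rw [hceq] at h0
      simp [hi] at h0
    have hJI : J = I := hImax.2 J hJmax.1 hIJ
    rw [hJI] at hxεJ
    have h1 : x₀ ∈ V := realCone_subset_span F.v I hx₀I
    have h2 : (fun j => x₀ j + ε * rv F.v i₀ j) ∈ V := realCone_subset_span F.v I hxεJ
    have : rv F.v i₀ = ε⁻¹ • ((fun j => x₀ j + ε * rv F.v i₀ j) - x₀) := by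
      funext j
      simp only [Pi.smul_apply, Pi.sub_apply, smul_eq_mul]
      field_simp
      ring
    rw [this] at hi₀
    exact hi₀ (V.smul_mem _ (V.sub_mem h2 h1))
  rw [eq_top_iff, ← span_real_top F.v hgen]
  apply Submodule.span_le.mpr
  rintro y ⟨i, rfl⟩
  exact hall i

end Helpers

/-- **Lemma 4.4 ii).** For every generator `[w]` of the shadow module `ℂ[𝚺;β_δ]_{Re β}`
there are a maximal cone `σ` of `Σ`, a unique element `c(α_δ) ∈ Box(σ;β_δ)` (with
corresponding `α ∈ Bx(σ;β)`), an element `v ∈ K ∩ N` and `l ∈ L(α,v)` with `lᵢ = 0` for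
`i ∉ I(σ)`, such that `w ∈ c(α_δ) + ∑_{i : lᵢ ∈ ℤ_{<0}} vᵢ + ∑_{i ∈ I(σ)} ℤ_{≥0} vᵢ`. -/
theorem statement15 {d k : ℕ} (S : GKZSetting d k) (β : Fin d → ℂ)
    (δ : ℝ) (hδ : 0 < δ)
    (hδsmall : ∀ α ∈ Bx S.F β, ∀ i : Fin k,
      (Int.fract ((α i).re + δ * (α i).im) = 0 ↔ α i = 0))
    (w : Fin d → ℝ) (hw : w ∈ ShadowPts S.F (reDeform β δ) (rePt β)) :
    ∃ I, IsMaxCone S.F I ∧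
      ∃! c : Fin d → ℝ, c ∈ BoxCone S.F (reDeform β δ) I ∧
        ∃ (αδ : Fin k → ℝ) (α : Fin k → ℂ),
          αδ ∈ BxConeR S.F (reDeform β δ) I ∧ α ∈ BxCone S.F β I ∧
          (∀ i, αδ i = Int.fract ((α i).re + δ * (α i).im)) ∧
          (∀ j, c j = ∑ i, αδ i * (S.F.v i j : ℝ)) ∧
          ∃ vpt ∈ latticeK S.F.v, ∃ l ∈ Lset S.F.v β α vpt,
            (∀ i, i ∉ I → l i = 0) ∧
            ∃ m : Fin k → ℕ, (∀ i, i ∉ I → m i = 0) ∧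
              (∀ i, (∃ z : ℤ, z < 0 ∧ l i = (z : ℂ)) → 1 ≤ m i) ∧
              ∀ j, w j = c j + ∑ i, (m i : ℝ) * (S.F.v i j : ℝ) := by
  classical
  obtain ⟨⟨n, hn⟩, hwK, ε₀, hε₀, hshadow⟩ := hw
  -- Step 1: a maximal cone containing `w` and `w + ε Re β`.
  obtain ⟨I, hImax, hwI, ε, hε, hwεI⟩ :=
    exists_maxcone_limit S.F w (rePt β) hε₀ (fun ε hε1 hε2 =>
      mem_maxcone_of_mem_K S.F S.hsupp (hshadow ε hε1 hε2))
  obtain ⟨t, ht0, htI, htw⟩ := hwI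
  obtain ⟨u, hu0, huI, huw⟩ := hwεI
  -- Step 2: the cone is full dimensional.
  have hspan := maxcone_span_top S.F S.hgen S.hsupp hImax
  have hImβ : (fun j => (β j).im) ∈
      Submodule.span ℝ (Set.range fun i : {x // x ∈ I} => rv S.F.v i.1) := by
    rw [hspan]; exact Submodule.mem_top
  obtain ⟨y', hy'⟩ := (Submodule.mem_span_range_iff_exists_fun ℝ).mp hImβ
  set y : Fin k → ℝ := fun i => if h : i ∈ I then y' ⟨i, h⟩ else 0 with hy
  have hyI : ∀ i ∉ I, y i = 0 := fun i hi => dif_neg hi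
  have hIm : ∀ j, ∑ i, y i * (S.F.v i j : ℝ) = (β j).im := by
    intro j
    rw [hy, extend_sum I y' (fun i => (S.F.v i j : ℝ))]
    have h1 := congrFun hy' j
    rw [Finset.sum_apply] at h1
    simpa only [Pi.smul_apply, smul_eq_mul, rv] using h1
  -- coefficients of Re β
  set r : Fin k → ℝ := fun i => (u i - t i) / ε with hr
  have hrI : ∀ i ∉ I, r i = 0 := fun i hi => by
    rw [hr]; simp only [huI i hi, htI i hi, sub_zero, zero_div]
  have hrβ : ∀ j, ∑ i, r i * (S.F.v i j : ℝ) = (β j).re := by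
    intro j
    have h2 : w j + ε * (β j).re = ∑ i, u i * (S.F.v i j : ℝ) := huw j
    have h3 : w j = ∑ i, t i * (S.F.v i j : ℝ) := htw j
    have h4 : ∑ i, r i * (S.F.v i j : ℝ)
        = (∑ i, u i * (S.F.v i j : ℝ) - ∑ i, t i * (S.F.v i j : ℝ)) / ε := by
      rw [← Finset.sum_sub_distrib, Finset.sum_div]
      exact Finset.sum_congr rfl fun i _ => by simp only [hr]; ring
    rw [h4, ← h2, ← h3]
    field_simp
    ring
  -- fractional parts of the coefficients of w
  set m : Fin k → ℕ := fun i => (⌊t i⌋).toNat with hm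
  have hmt : ∀ i, (m i : ℝ) = ((⌊t i⌋ : ℤ) : ℝ) := by
    intro i
    have h5 : ((⌊t i⌋).toNat : ℤ) = ⌊t i⌋ := Int.toNat_of_nonneg (Int.floor_nonneg.mpr (ht0 i))
    rw [hm]; exact_mod_cast congrArg (Int.cast : ℤ → ℝ) h5
  set αδ : Fin k → ℝ := fun i => Int.fract (t i) with hαδ
  have hαδ0 : ∀ i, 0 ≤ αδ i := fun i => Int.fract_nonneg _
  have hαδ1 : ∀ i, αδ i < 1 := fun i => Int.fract_lt_one _
  have ht_split : ∀ i, t i = (m i : ℝ) + αδ i := fun i => by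
    simp only [hαδ, hmt i]; exact (Int.floor_add_fract (t i)).symm
  have hαδI : ∀ i ∉ I, αδ i = 0 := fun i hi => by simp only [hαδ, htI i hi]; exact Int.fract_zero
  have hmI : ∀ i ∉ I, m i = 0 := fun i hi => by simp only [hm, htI i hi]; simp
  have hαδsum : ∀ j, ∑ i, αδ i * (S.F.v i j : ℝ) = w j - ∑ i, (m i : ℝ) * (S.F.v i j : ℝ) := by
    intro j
    rw [eq_sub_iff_add_eq, ← Finset.sum_add_distrib]
    calc ∑ i, (αδ i * (S.F.v i j : ℝ) + (m i : ℝ) * (S.F.v i j : ℝ))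
        = ∑ i, t i * (S.F.v i j : ℝ) :=
          Finset.sum_congr rfl fun i _ => by rw [ht_split i]; ring
      _ = w j := (htw j).symm
  set n' : Fin d → ℤ := fun j => n j - ∑ i, (m i : ℤ) * S.F.v i j with hn'
  have hc : ∀ j, ∑ i, αδ i * (S.F.v i j : ℝ) = ((n' j : ℤ) : ℝ) + reDeform β δ j := by
    intro j
    rw [hαδsum j, hn j, hn']
    push_cast
    ring
  -- the complex box element α
  set e : Fin k → ℤ := fun i => ⌊αδ i - δ * y i⌋ with he
  set X : Fin k → ℝ := fun i => Int.fract (αδ i - δ * y i) with hX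
  have hX_eq : ∀ i, X i = αδ i - δ * y i - (e i : ℝ) := fun i => (Int.self_sub_floor _).symm
  have hX0 : ∀ i, 0 ≤ X i := fun i => Int.fract_nonneg _
  have hX1 : ∀ i, X i < 1 := fun i => Int.fract_lt_one _
  have hXI : ∀ i ∉ I, X i = 0 := fun i hi => by
    simp only [hX, hαδI i hi, hyI i hi, mul_zero, sub_zero]; exact Int.fract_zero
  set n'' : Fin d → ℤ := fun j => n j - ∑ i, ((m i : ℤ) + e i) * S.F.v i j with hn''
  have hXsum : ∀ j, ∑ i, X i * (S.F.v i j : ℝ) = ((n'' j : ℤ) : ℝ) + (β j).re := by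
    intro j
    have h1 : ∀ i, X i * (S.F.v i j : ℝ) = αδ i * (S.F.v i j : ℝ)
        - δ * (y i * (S.F.v i j : ℝ)) - (e i : ℝ) * (S.F.v i j : ℝ) := fun i => by
      rw [hX_eq i]; ring
    rw [Finset.sum_congr rfl (fun i _ => h1 i), Finset.sum_sub_distrib,
      Finset.sum_sub_distrib, ← Finset.mul_sum, hIm j, hαδsum j, hn j, hn'']
    simp only [reDeform]
    push_cast
    rw [show ∑ x : Fin k, ((m x : ℝ) + (e x : ℝ)) * (S.F.v x j : ℝ)
        = ∑ x : Fin k, (m x : ℝ) * (S.F.v x j : ℝ) + ∑ x : Fin k, (e x : ℝ) * (S.F.v x j : ℝ)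
      from by rw [← Finset.sum_add_distrib]; exact Finset.sum_congr rfl fun i _ => by ring]
    ring
  set α : Fin k → ℂ := fun i => ⟨X i, y i⟩ with hα
  have hαre : ∀ i, (α i).re = X i := fun i => rfl
  have hαim : ∀ i, (α i).im = y i := fun i => rfl
  have hαI : ∀ i ∉ I, α i = 0 := fun i hi =>
    Complex.ext (by rw [hαre, hXI i hi]; rfl) (by rw [hαim, hyI i hi]; rfl)
  have hαsum : ∀ j, ∑ i, α i * ((S.F.v i j : ℤ) : ℂ) = ((n'' j : ℤ) : ℂ) + β j := by
    intro j
    apply Complex.ext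
    · have h1 : ∀ i, (α i * ((S.F.v i j : ℤ) : ℂ)).re = X i * (S.F.v i j : ℝ) := fun i => by
        simp [Complex.mul_re, hαre, hαim]
      rw [Complex.re_sum, Finset.sum_congr rfl (fun i _ => h1 i), hXsum j]
      simp
    · have h1 : ∀ i, (α i * ((S.F.v i j : ℤ) : ℂ)).im = y i * (S.F.v i j : ℝ) := fun i => by
        simp [Complex.mul_im, hαre, hαim]
      rw [Complex.im_sum, Finset.sum_congr rfl (fun i _ => h1 i), hIm j]
      simp
  -- the shift l and the lattice point vpt
  set z : Fin k → ℤ :=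
    fun i => if i ∈ I then (if α i = 0 ∧ m i = 0 then 0 else ⌊r i - X i⌋) else 0 with hz
  set l : Fin k → ℂ := fun i => α i + (z i : ℂ) with hl
  set vpt : Fin d → ℤ := fun j => -(n'' j) - ∑ i, z i * S.F.v i j with hvpt
  -- α = 0 implies αδ = 0 implies t = m (useful below)
  have hα0αδ : ∀ i, α i = 0 → (X i = 0 ∧ y i = 0 ∧ αδ i = 0) := by
    intro i h0
    have hx0 : X i = 0 := by rw [← hαre i, h0]; rfl
    have hy0 : y i = 0 := by rw [← hαim i, h0]; rfl
    refine ⟨hx0, hy0, ?_⟩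
    have : X i = Int.fract (αδ i) := by simp only [hX, hy0]; norm_num
    rw [Int.fract_eq_self.mpr ⟨hαδ0 i, hαδ1 i⟩] at this
    rw [← this, hx0]
  refine ⟨I, hImax, (fun j => ∑ i, αδ i * (S.F.v i j : ℝ)), ⟨?_, ?_⟩, ?_⟩
  · -- BoxCone membership
    exact ⟨⟨n', fun j => hc j⟩, αδ, ⟨fun i => ⟨hαδ0 i, hαδ1 i⟩, hαδI, n', hc⟩, fun j => rfl⟩
  · -- the main existence data
    refine ⟨αδ, α, ⟨fun i => ⟨hαδ0 i, hαδ1 i⟩, hαδI, n', hc⟩,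
      ⟨fun i => ⟨hX0 i, hX1 i⟩, hαI, n'', hαsum⟩, ?_, fun j => rfl, ?_⟩
    · -- fract relation
      intro i
      show αδ i = Int.fract (X i + δ * y i)
      have h1 : X i + δ * y i = αδ i - (e i : ℝ) := by rw [hX_eq i]; ring
      rw [h1, Int.fract_sub_intCast, Int.fract_eq_self.mpr ⟨hαδ0 i, hαδ1 i⟩]
    · -- vpt, l, and the final decomposition
      refine ⟨vpt, ?_, l, ⟨?_, fun i => ⟨z i, by simp only [hl]; ring⟩⟩, ?_, m, hmI, ?_, ?_⟩
      · -- vpt ∈ latticeK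
        refine ⟨fun i => r i - X i - (z i : ℝ), ?_, ?_⟩
        · intro i
          dsimp only
          by_cases hi : i ∈ I
          · by_cases hcase : α i = 0 ∧ m i = 0
            · have hz0 : z i = 0 := by simp only [hz]; rw [if_pos hi, if_pos hcase]
              obtain ⟨hx0, hy0, hαδ0i⟩ := hα0αδ i hcase.1
              have ht0i : t i = 0 := by
                rw [ht_split i, hαδ0i, hcase.2]; norm_num
              have hr0 : 0 ≤ r i := by
                simp only [hr]
                rw [ht0i, sub_zero]
                exact div_nonneg (hu0 i) hε.le
              rw [hz0, hx0]
              push_cast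
              linarith
            · have hz1 : z i = ⌊r i - X i⌋ := by simp only [hz]; rw [if_pos hi, if_neg hcase]
              rw [hz1]
              have := Int.floor_le (r i - X i)
              linarith
          · have hz0 : z i = 0 := by simp only [hz]; rw [if_neg hi]
            rw [hz0, hrI i hi, hXI i hi]
            norm_num
        · intro j
          show ((vpt j : ℤ) : ℝ) = _
          have hsplit : ∑ i, (r i - X i - (z i : ℝ)) * (S.F.v i j : ℝ)
              = ∑ i, r i * (S.F.v i j : ℝ) - ∑ i, X i * (S.F.v i j : ℝ)
                - ∑ i, (z i : ℝ) * (S.F.v i j : ℝ) := by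
            rw [← Finset.sum_sub_distrib, ← Finset.sum_sub_distrib]
            exact Finset.sum_congr rfl fun i _ => by ring
          rw [hsplit, hrβ j, hXsum j, hvpt]
          push_cast
          ring
      · -- sum condition in Lset
        intro j
        have hsplit : ∑ i, l i * ((S.F.v i j : ℤ) : ℂ)
            = ∑ i, α i * ((S.F.v i j : ℤ) : ℂ) + ∑ i, ((z i : ℤ) : ℂ) * ((S.F.v i j : ℤ) : ℂ) := by
          rw [← Finset.sum_add_distrib]
          exact Finset.sum_congr rfl fun i _ => by simp only [hl]; ring
        rw [hsplit, hαsum j, hvpt]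
        push_cast
        ring
      · -- l vanishes off I
        intro i hi
        have hz0 : z i = 0 := by simp only [hz]; rw [if_neg hi]
        simp only [hl]
        rw [hαI i hi, hz0]
        norm_num
      · -- negative integers force m ≥ 1
        rintro i ⟨q, hq, hlq⟩
        by_cases hi : i ∈ I
        · have hαi : α i = (q : ℂ) - (z i : ℂ) := by
            simp only [hl] at hlq
            linear_combination hlq
          have hXi : X i = ((q - z i : ℤ) : ℝ) := by
            have h6 := congrArg Complex.re hαi
            rw [hαre] at h6
            rw [h6]
            push_cast
            simp
          have hq0 : q - z i = 0 := by
            have h0 : (0 : ℝ) ≤ ((q - z i : ℤ) : ℝ) := hXi ▸ hX0 i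
            have h1 : ((q - z i : ℤ) : ℝ) < 1 := hXi ▸ hX1 i
            have h0' : (0 : ℤ) ≤ q - z i := by exact_mod_cast h0
            have h1' : q - z i < 1 := by exact_mod_cast h1
            omega
          have hαi0 : α i = 0 := by
            rw [hαi]
            have : (z i : ℂ) = (q : ℂ) := by exact_mod_cast congrArg (Int.cast : ℤ → ℂ) (by omega : z i = q)
            rw [this]; ring
          by_contra hm1
          have hmi0 : m i = 0 := by omega
          have hz0 : z i = 0 := by simp only [hz]; rw [if_pos hi, if_pos ⟨hαi0, hmi0⟩]
          omega
        · have hz0 : z i = 0 := by simp only [hz]; rw [if_neg hi]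
          have hq0 : (q : ℂ) = 0 := by
            rw [← hlq]
            simp only [hl]
            rw [hαI i hi, hz0]
            norm_num
          have : q = 0 := by exact_mod_cast hq0
          omega
      · -- decomposition of w
        intro j
        rw [htw j, ← Finset.sum_add_distrib]
        exact Finset.sum_congr rfl fun i _ => by rw [ht_split i]; ring
  · -- uniqueness
    rintro c' ⟨-, αδ', α', hαδ'R, -, -, hc'eq, vpt', -, l', -, -, m', hm'0, -, hw'⟩
    obtain ⟨hαδ'01, hαδ'I, -⟩ := hαδ'R
    have hAB : (fun i => αδ' i + (m' i : ℝ)) = (fun i => αδ i + (m i : ℝ)) := by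
      apply coeff_unique S.F hImax.1
      · intro i hi; rw [hαδ'I i hi, hm'0 i hi]; norm_num
      · intro i hi; rw [hαδI i hi, hmI i hi]; norm_num
      · intro j
        have h7 : ∑ i, (αδ' i + (m' i : ℝ)) * (S.F.v i j : ℝ)
            = (∑ i, αδ' i * (S.F.v i j : ℝ)) + ∑ i, (m' i : ℝ) * (S.F.v i j : ℝ) := by
          rw [← Finset.sum_add_distrib]
          exact Finset.sum_congr rfl fun i _ => by ring
        have h8 : ∑ i, (αδ i + (m i : ℝ)) * (S.F.v i j : ℝ)
            = (∑ i, αδ i * (S.F.v i j : ℝ)) + ∑ i, (m i : ℝ) * (S.F.v i j : ℝ) := by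
          rw [← Finset.sum_add_distrib]
          exact Finset.sum_congr rfl fun i _ => by ring
        rw [h7, h8, ← hc'eq j, ← hw' j, hαδsum j]
        ring
    have hαδeq : ∀ i, αδ' i = αδ i := by
      intro i
      have h9 : αδ' i + (m' i : ℝ) = αδ i + (m i : ℝ) := congrFun hAB i
      have h10 : Int.fract (αδ' i + (m' i : ℝ)) = αδ' i := by
        rw [show ((m' i : ℝ)) = (((m' i : ℕ) : ℤ) : ℝ) by push_cast; ring, Int.fract_add_intCast,
          Int.fract_eq_self.mpr ⟨(hαδ'01 i).1, (hαδ'01 i).2⟩]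
      have h11 : Int.fract (αδ i + (m i : ℝ)) = αδ i := by
        rw [show ((m i : ℝ)) = (((m i : ℕ) : ℤ) : ℝ) by push_cast; ring, Int.fract_add_intCast,
          Int.fract_eq_self.mpr ⟨hαδ0 i, hαδ1 i⟩]
      rw [← h10, h9, h11]
    funext j
    rw [hc'eq j]
    exact Finset.sum_congr rfl fun i _ => by rw [hαδeq i]

end GKZpaper
end
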